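/- arXiv:math/0503547 — 10 statements merged into one kernel-verified Lean document; each statement's English description precedes it below -/
import Mathlib

section
/- Suppose either (a) 1 < r ≤ 2 and e is a real random variable whose distribution is symmetric about 0 with E(|e|^r) < ∞, or (b) r = 2 and e is a real random variable with E(e) = 0 and E(e²) < ∞. Let a, b : ℝ^p → ℝ be Borel functions and a₀,…,a_p, b₀,…,b_p nonnegative constants such that |a(x)| ≤ a₀ + a₁|x₁| + ⋯ + a_p|x_p| and 0 ≤ b(x) ≤ (b₀² + b₁²x₁² + ⋯ + b_p²x_p²)^{1/2} for all x ∈ ℝ^p. Then for every δ > 0 there exists K < ∞ such that for every x = (x₁,…,x_p) ∈ ℝ^p, E(|a(x) + b(x)e|^r) ≤ K + Σ_{i=1}^p ((1+δ) a_i (Σ_{k=1}^p a_k)^{r−1} + b_i^r E(|e|^r)) |x_i|^r. -/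
/-!
For fixed `x` everything rests on the moment bound `E|c + d e|^r ≤ |c|^r + |d|^r E|e|^r`
with `c = a(x)`, `d = b(x)`. For symmetric `e` it follows by averaging the integrand over `e`
and `-e` and the Clarkson-type inequality `|u + v|^r + |u - v|^r ≤ 2 (|u|^r + |v|^r)`
(valid for `r ≤ 2`); for `r = 2` and centred `e` it is an identity.
Then `|a(x)|^r ≤ (a₀ + S)^r` with `S = ∑ aᵢ|xᵢ|`, and `(a₀ + S)^r ≤ K + (1 + δ) S^r` since
`a₀` is negligible for large `S`; the weighted power-mean inequality gives
`S^r ≤ (∑ aₖ)^(r-1) ∑ aᵢ|xᵢ|^r`. Subadditivity of `t ↦ t^(r/2)` turns the bound on `b(x)`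
into `b(x)^r ≤ |b₀|^r + ∑ bᵢ^r |xᵢ|^r`.
-/

open MeasureTheory Finset

lemma abs_rpow_eq_sq_rpow_half (t r : ℝ) : |t| ^ r = (t ^ 2) ^ (r / 2) := by
  rw [← sq_abs t, ← Real.rpow_natCast, ← Real.rpow_mul (abs_nonneg t)]
  congr 1
  push_cast
  ring

lemma Real.rpow_sum_le_sum_rpow {ι : Type*} (s : Finset ι) {f : ι → ℝ} {p : ℝ} (hp0 : 0 < p)
    (hp1 : p ≤ 1) (hf : ∀ i ∈ s, 0 ≤ f i) : (∑ i ∈ s, f i) ^ p ≤ ∑ i ∈ s, f i ^ p := by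
  classical
  induction s using Finset.induction with
  | empty => simp [Real.zero_rpow hp0.ne']
  | insert j t hj ih =>
    rw [sum_insert hj, sum_insert hj]
    grw [Real.rpow_add_le_add_rpow (hf j (mem_insert_self j t))
      (sum_nonneg fun i hi => hf i (mem_insert_of_mem hi)) hp0.le hp1,
      ih fun i hi => hf i (mem_insert_of_mem hi)]

lemma Real.sum_mul_rpow_le {ι : Type*} (s : Finset ι) {w f : ι → ℝ} {r : ℝ} (hr : 1 ≤ r)
    (hw : ∀ i, 0 ≤ w i) (hf : ∀ i, 0 ≤ f i) :
    (∑ i ∈ s, w i * f i) ^ r ≤ (∑ i ∈ s, w i) ^ (r - 1) * ∑ i ∈ s, w i * f i ^ r := by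
  have hr0 : 0 < r := by linarith
  have hW : 0 ≤ ∑ i ∈ s, w i := sum_nonneg fun i _ => hw i
  have hWf : 0 ≤ ∑ i ∈ s, w i * f i ^ r :=
    sum_nonneg fun i _ => mul_nonneg (hw i) (Real.rpow_nonneg (hf i) r)
  calc (∑ i ∈ s, w i * f i) ^ r
      ≤ ((∑ i ∈ s, w i) ^ (1 - r⁻¹) * (∑ i ∈ s, w i * f i ^ r) ^ r⁻¹) ^ r :=
        Real.rpow_le_rpow (sum_nonneg fun i _ => mul_nonneg (hw i) (hf i))
          (inner_le_weight_mul_Lp_of_nonneg s hr w f hw hf) hr0.le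
    _ = (∑ i ∈ s, w i) ^ (r - 1) * ∑ i ∈ s, w i * f i ^ r := by
        rw [Real.mul_rpow (by positivity) (by positivity), ← Real.rpow_mul hW,
          ← Real.rpow_mul hWf, inv_mul_cancel₀ hr0.ne', Real.rpow_one, sub_mul, one_mul,
          inv_mul_cancel₀ hr0.ne']

lemma Real.sqrt_sq_add_sum_sq_rpow_le {ι : Type*} (s : Finset ι) (u : ℝ) (v : ι → ℝ) {r : ℝ}
    (hr0 : 0 < r) (hr2 : r ≤ 2) :
    √(u ^ 2 + ∑ i ∈ s, v i ^ 2) ^ r ≤ |u| ^ r + ∑ i ∈ s, |v i| ^ r := by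
  have hsum : 0 ≤ ∑ i ∈ s, v i ^ 2 := sum_nonneg fun i _ => sq_nonneg (v i)
  calc √(u ^ 2 + ∑ i ∈ s, v i ^ 2) ^ r = (u ^ 2 + ∑ i ∈ s, v i ^ 2) ^ (r / 2) := by
        rw [Real.sqrt_eq_rpow, ← Real.rpow_mul (by positivity)]
        ring_nf
    _ ≤ (u ^ 2) ^ (r / 2) + ∑ i ∈ s, (v i ^ 2) ^ (r / 2) := by
        grw [Real.rpow_add_le_add_rpow (sq_nonneg u) hsum (by linarith) (by linarith),
          Real.rpow_sum_le_sum_rpow s (by linarith) (by linarith) fun i _ => sq_nonneg (v i)]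
    _ = |u| ^ r + ∑ i ∈ s, |v i| ^ r := by simp only [abs_rpow_eq_sq_rpow_half]

/-- Concavity and subadditivity of `t ↦ t ^ (r / 2)`, applied to
`(u + v)² + (u - v)² = 2 (u² + v²)`. -/
lemma abs_add_rpow_add_abs_sub_rpow_le {r : ℝ} (hr0 : 0 ≤ r) (hr2 : r ≤ 2) (u v : ℝ) :
    |u + v| ^ r + |u - v| ^ r ≤ 2 * (|u| ^ r + |v| ^ r) := by
  simp only [abs_rpow_eq_sq_rpow_half]
  have hconc := (Real.concaveOn_rpow (p := r / 2) (by linarith) (by linarith)).2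
    (Set.mem_Ici.2 (sq_nonneg (u + v))) (Set.mem_Ici.2 (sq_nonneg (u - v)))
    (by norm_num : (0 : ℝ) ≤ 1 / 2) (by norm_num : (0 : ℝ) ≤ 1 / 2) (by norm_num)
  have hsub := Real.rpow_add_le_add_rpow (sq_nonneg u) (sq_nonneg v)
    (p := r / 2) (by linarith) (by linarith)
  have hmid : 1 / 2 * (u + v) ^ 2 + 1 / 2 * (u - v) ^ 2 = u ^ 2 + v ^ 2 := by ring
  simp only [smul_eq_mul, hmid] at hconc
  linarith

lemma abs_add_rpow_le {r : ℝ} (hr0 : 0 ≤ r) (hr2 : r ≤ 2) (u v : ℝ) :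
    |u + v| ^ r ≤ 2 * (|u| ^ r + |v| ^ r) := by
  linarith [abs_add_rpow_add_abs_sub_rpow_le hr0 hr2 u v,
    Real.rpow_nonneg (abs_nonneg (u - v)) r]

lemma exists_add_rpow_le {a₀ r δ : ℝ} (ha₀ : 0 ≤ a₀) (hr : 0 < r) (hδ : 0 < δ) :
    ∃ K, ∀ S, 0 ≤ S → (a₀ + S) ^ r ≤ K + (1 + δ) * S ^ r := by
  set c := (1 + δ) ^ r⁻¹
  have hc : 1 < c := Real.one_lt_rpow (by linarith) (inv_pos.2 hr)
  -- beyond `M` the constant `a₀` is absorbed: `a₀ + S ≤ c * S`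
  set M := a₀ / (c - 1)
  refine ⟨(a₀ + M) ^ r, fun S hS => ?_⟩
  rcases le_or_gt S M with hSM | hMS
  · have := Real.rpow_le_rpow (by linarith) (by linarith : a₀ + S ≤ a₀ + M) hr.le
    have : 0 ≤ (1 + δ) * S ^ r := by positivity
    linarith
  · have habsorb : a₀ + S ≤ c * S := by
      have := (div_lt_iff₀ (by linarith : 0 < c - 1)).1 hMS
      linarith
    have hcS : (c * S) ^ r = (1 + δ) * S ^ r := by
      rw [Real.mul_rpow (by positivity) hS, ← Real.rpow_mul (by linarith),
        inv_mul_cancel₀ hr.ne', Real.rpow_one]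
    have := Real.rpow_le_rpow (by linarith) habsorb hr.le
    have : 0 ≤ (a₀ + M) ^ r := Real.rpow_nonneg (by positivity) r
    linarith

section Moments

variable {Ω : Type*} [MeasurableSpace Ω] {μ : Measure Ω} {e : Ω → ℝ}

lemma integrable_abs_add_mul_rpow [IsFiniteMeasure μ] {r : ℝ} (hr0 : 0 ≤ r) (hr2 : r ≤ 2)
    (he : Measurable e) (hmom : Integrable (fun ω => |e ω| ^ r) μ) (c d : ℝ) :
    Integrable (fun ω => |c + d * e ω| ^ r) μ := by
  have hdom : Integrable (fun ω => 2 * (|c| ^ r + |d| ^ r * |e ω| ^ r)) μ :=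
    ((integrable_const _).add (hmom.const_mul _)).const_mul 2
  refine hdom.mono' (by fun_prop) (Filter.Eventually.of_forall fun ω => ?_)
  rw [Real.norm_of_nonneg (by positivity), ← Real.mul_rpow (abs_nonneg d) (abs_nonneg _),
    ← abs_mul]
  exact abs_add_rpow_le hr0 hr2 c (d * e ω)

lemma integral_comp_neg_eq_of_map_eq (he : Measurable e)
    (hsym : μ.map e = μ.map (fun ω => -e ω)) {f : ℝ → ℝ} (hf : Measurable f) :
    ∫ ω, f (-e ω) ∂μ = ∫ ω, f (e ω) ∂μ := by
  calc ∫ ω, f (-e ω) ∂μ = ∫ t, f t ∂(μ.map fun ω => -e ω) :=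
        (integral_map he.neg.aemeasurable hf.aestronglyMeasurable).symm
    _ = ∫ ω, f (e ω) ∂μ := by
        rw [← hsym, integral_map he.aemeasurable hf.aestronglyMeasurable]

lemma integral_abs_add_mul_rpow_le_of_map_eq [IsProbabilityMeasure μ] {r : ℝ} (hr0 : 0 ≤ r)
    (hr2 : r ≤ 2) (he : Measurable e) (hsym : μ.map e = μ.map (fun ω => -e ω))
    (hmom : Integrable (fun ω => |e ω| ^ r) μ) (c d : ℝ) :
    ∫ ω, |c + d * e ω| ^ r ∂μ ≤ |c| ^ r + |d| ^ r * ∫ ω, |e ω| ^ r ∂μ := by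
  have hint := integrable_abs_add_mul_rpow hr0 hr2 he hmom c d
  have hint_sub : Integrable (fun ω => |c - d * e ω| ^ r) μ := by
    simpa [sub_eq_add_neg] using integrable_abs_add_mul_rpow hr0 hr2 he hmom c (-d)
  have hneg : ∫ ω, |c - d * e ω| ^ r ∂μ = ∫ ω, |c + d * e ω| ^ r ∂μ := by
    simpa [sub_eq_add_neg] using
      integral_comp_neg_eq_of_map_eq he hsym (f := fun t => |c + d * t| ^ r) (by fun_prop)
  have hsum : ∫ ω, (|c + d * e ω| ^ r + |c - d * e ω| ^ r) ∂μ
      ≤ ∫ ω, 2 * (|c| ^ r + |d| ^ r * |e ω| ^ r) ∂μ := by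
    refine integral_mono (hint.add hint_sub) (by fun_prop) fun ω => ?_
    simpa [abs_mul, Real.mul_rpow (abs_nonneg d) (abs_nonneg (e ω))] using
      abs_add_rpow_add_abs_sub_rpow_le hr0 hr2 c (d * e ω)
  rw [integral_add hint hint_sub, hneg,
    integral_const_mul, integral_add (integrable_const _) (hmom.const_mul _),
    integral_const_mul] at hsum
  simp only [integral_const, probReal_univ, smul_eq_mul, one_mul] at hsum
  linarith

lemma integral_add_mul_sq_of_integral_eq_zero [IsProbabilityMeasure μ] (he : MemLp e 2 μ)
    (hmean : ∫ ω, e ω ∂μ = 0) (c d : ℝ) :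
    ∫ ω, (c + d * e ω) ^ 2 ∂μ = c ^ 2 + d ^ 2 * ∫ ω, e ω ^ 2 ∂μ := by
  have h1 : Integrable e μ := he.integrable one_le_two
  have h2 : Integrable (fun ω => e ω ^ 2) μ := he.integrable_sq
  calc ∫ ω, (c + d * e ω) ^ 2 ∂μ = ∫ ω, (c ^ 2 + 2 * c * d * e ω + d ^ 2 * e ω ^ 2) ∂μ := by
        congr 1 with ω; ring
    _ = c ^ 2 + 2 * c * d * ∫ ω, e ω ∂μ + d ^ 2 * ∫ ω, e ω ^ 2 ∂μ := by
        have hlin : Integrable (fun ω => c ^ 2 + 2 * c * d * e ω) μ :=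
          (integrable_const _).add (h1.const_mul _)
        rw [integral_add hlin (h2.const_mul _),
          integral_add (integrable_const _) (h1.const_mul _), integral_const_mul,
          integral_const_mul]
        simp
    _ = c ^ 2 + d ^ 2 * ∫ ω, e ω ^ 2 ∂μ := by rw [hmean]; ring

end Moments

theorem stmt2_general {Ω : Type*} [MeasurableSpace Ω] (μ : Measure Ω) [IsProbabilityMeasure μ]
    (p : ℕ) (r : ℝ)
    (e : Ω → ℝ) (he : Measurable e) (hmom : Integrable (fun ω => |e ω| ^ r) μ)
    (hcase : (1 < r ∧ r ≤ 2 ∧ μ.map e = μ.map (fun ω => -e ω)) ∨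
      (r = 2 ∧ ∫ ω, e ω ∂μ = 0))
    (a b : (Fin p → ℝ) → ℝ)
    (a₀ b₀ : ℝ) (A B : Fin p → ℝ)
    (hA : ∀ i, 0 ≤ A i) (hB : ∀ i, 0 ≤ B i)
    (habd : ∀ x, |a x| ≤ a₀ + ∑ i, A i * |x i|)
    (hb0 : ∀ x, 0 ≤ b x)
    (hbbd : ∀ x, b x ≤ Real.sqrt (b₀ ^ 2 + ∑ i, B i ^ 2 * x i ^ 2)) :
    ∀ δ : ℝ, 0 < δ →
      ∃ K : ℝ, ∀ x : Fin p → ℝ,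
        ∫ ω, |a x + b x * e ω| ^ r ∂μ
          ≤ K + ∑ i, ((1 + δ) * A i * (∑ k, A k) ^ (r - 1)
              + B i ^ r * ∫ ω, |e ω| ^ r ∂μ) * |x i| ^ r := by
  intro δ hδ
  obtain ⟨hr1, hr2⟩ : 1 < r ∧ r ≤ 2 := by
    rcases hcase with ⟨h1, h2, -⟩ | ⟨rfl, -⟩
    exacts [⟨h1, h2⟩, by norm_num]
  have hmoment : ∀ c d : ℝ,
      ∫ ω, |c + d * e ω| ^ r ∂μ ≤ |c| ^ r + |d| ^ r * ∫ ω, |e ω| ^ r ∂μ := by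
    rcases hcase with ⟨-, -, hsym⟩ | ⟨rfl, hmean⟩
    · exact integral_abs_add_mul_rpow_le_of_map_eq (by linarith) hr2 he hsym hmom
    · simp only [Real.rpow_two, sq_abs] at hmom ⊢
      intro c d
      rw [integral_add_mul_sq_of_integral_eq_zero
        ((memLp_two_iff_integrable_sq he.aestronglyMeasurable).2 hmom) hmean]
  have ha₀ : 0 ≤ a₀ := by simpa using (abs_nonneg _).trans (habd 0)
  obtain ⟨K, hK⟩ := exists_add_rpow_le ha₀ (by linarith : 0 < r) hδ
  refine ⟨K + |b₀| ^ r * ∫ ω, |e ω| ^ r ∂μ, fun x => ?_⟩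
  have ha : |a x| ^ r ≤ K + (1 + δ) * ((∑ k, A k) ^ (r - 1) * ∑ i, A i * |x i| ^ r) := by
    grw [habd x, hK _ (sum_nonneg fun i _ => mul_nonneg (hA i) (abs_nonneg _)),
      Real.sum_mul_rpow_le _ hr1.le hA fun i => abs_nonneg (x i)]
  have hb : |b x| ^ r ≤ |b₀| ^ r + ∑ i, B i ^ r * |x i| ^ r := by
    rw [abs_of_nonneg (hb0 x)]
    refine (Real.rpow_le_rpow (hb0 x) (hbbd x) (by linarith)).trans ?_
    simpa [← mul_pow, abs_mul, abs_of_nonneg (hB _), Real.mul_rpow (hB _) (abs_nonneg _)] using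
      Real.sqrt_sq_add_sum_sq_rpow_le univ b₀ (fun i => B i * x i) (by linarith) hr2
  calc ∫ ω, |a x + b x * e ω| ^ r ∂μ ≤ |a x| ^ r + |b x| ^ r * ∫ ω, |e ω| ^ r ∂μ :=
        hmoment _ _
    _ ≤ _ := by grw [ha, hb]
    _ = _ := by
        simp only [add_mul, mul_sum, sum_mul, sum_add_distrib]
        ring_nf

/-- Suppose either (a) `1 < r ≤ 2` and the law of `e` is symmetric about `0`
with `E(|e|^r) < ∞`, or (b) `r = 2`, `E(e) = 0` and `E(e²) < ∞`.  If
`|a(x)| ≤ a₀ + ∑ aᵢ|xᵢ|` and `0 ≤ b(x) ≤ (b₀² + ∑ bᵢ²xᵢ²)^{1/2}` with nonnegative constants,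
then for every `δ > 0` there is `K < ∞` such that for all `x`,
`E(|a(x)+b(x)e|^r) ≤ K + ∑ ((1+δ) aᵢ (∑ aₖ)^{r−1} + bᵢ^r E(|e|^r)) |xᵢ|^r`. -/
theorem stmt2 {Ω : Type*} [MeasurableSpace Ω] (μ : Measure Ω) [IsProbabilityMeasure μ]
    (p : ℕ) (hp : 1 ≤ p) (r : ℝ)
    (e : Ω → ℝ) (he : Measurable e) (hmom : Integrable (fun ω => |e ω| ^ r) μ)
    (hcase : (1 < r ∧ r ≤ 2 ∧ μ.map e = μ.map (fun ω => -e ω)) ∨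
      (r = 2 ∧ ∫ ω, e ω ∂μ = 0))
    (a b : (Fin p → ℝ) → ℝ) (ham : Measurable a) (hbm : Measurable b)
    (a₀ b₀ : ℝ) (A B : Fin p → ℝ)
    (ha₀ : 0 ≤ a₀) (hb₀ : 0 ≤ b₀) (hA : ∀ i, 0 ≤ A i) (hB : ∀ i, 0 ≤ B i)
    (habd : ∀ x, |a x| ≤ a₀ + ∑ i, A i * |x i|)
    (hb0 : ∀ x, 0 ≤ b x)
    (hbbd : ∀ x, b x ≤ Real.sqrt (b₀ ^ 2 + ∑ i, B i ^ 2 * x i ^ 2)) :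
    ∀ δ : ℝ, 0 < δ →
      ∃ K : ℝ, ∀ x : Fin p → ℝ,
        ∫ ω, |a x + b x * e ω| ^ r ∂μ
          ≤ K + ∑ i, ((1 + δ) * A i * (∑ k, A k) ^ (r - 1)
              + B i ^ r * ∫ ω, |e ω| ^ r ∂μ) * |x i| ^ r :=
  stmt2_general μ p r e he hmom hcase a b a₀ b₀ A B hA hB habd hb0 hbbd
end

section
/- For every r with 1 < r ≤ 2 and every u ∈ [0,1], one has (1−u)^r + (1+u)^r − 2u^r ≤ 2. -/
open scoped NNReal

lemma real_rpow_add_le_add_rpow {p : ℝ} (a b : ℝ) (ha : 0 ≤ a) (hb : 0 ≤ b)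
    (hp : 0 ≤ p) (hp1 : p ≤ 1) : (a + b) ^ p ≤ a ^ p + b ^ p := by
  have h := NNReal.rpow_add_le_add_rpow (⟨a, ha⟩ : ℝ≥0) (⟨b, hb⟩ : ℝ≥0) hp hp1
  have := NNReal.coe_le_coe.mpr h
  push_cast [NNReal.coe_rpow] at this
  exact this

lemma rpow_sq_helper (x : ℝ) (hx : 0 ≤ x) (r : ℝ) : (x ^ 2) ^ (r / 2) = x ^ r := by
  rw [← Real.rpow_natCast x 2, ← Real.rpow_mul hx]
  congr 1; ring

/-- For every `r` with `1 < r ≤ 2` and every `u ∈ [0,1]`,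
`(1−u)^r + (1+u)^r − 2u^r ≤ 2`, where `t^r` is the real power for `t ≥ 0`. -/
theorem stmt3 (r u : ℝ) (hr1 : 1 < r) (hr2 : r ≤ 2) (hu0 : 0 ≤ u) (hu1 : u ≤ 1) :
    (1 - u) ^ r + (1 + u) ^ r - 2 * u ^ r ≤ 2 := by
  set s := r / 2 with hs
  have hs0 : (0:ℝ) ≤ s := by positivity
  have hs1 : s ≤ 1 := by rw [hs]; linarith
  have h1u : (0:ℝ) ≤ 1 - u := by linarith
  have h1u' : (0:ℝ) ≤ 1 + u := by linarith
  have hconc := (Real.concaveOn_rpow hs0 hs1).2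
    (Set.mem_Ici.mpr (sq_nonneg (1 - u))) (Set.mem_Ici.mpr (sq_nonneg (1 + u)))
    (by norm_num : (0:ℝ) ≤ 1/2) (by norm_num : (0:ℝ) ≤ 1/2) (by norm_num)
  simp only [smul_eq_mul] at hconc
  have hmid : (1:ℝ)/2 * (1 - u) ^ 2 + 1/2 * (1 + u) ^ 2 = 1 + u ^ 2 := by ring
  rw [hmid] at hconc
  have hsub : (1 + u ^ 2) ^ s ≤ 1 + u ^ r := by
    have h := real_rpow_add_le_add_rpow 1 (u ^ 2) zero_le_one (sq_nonneg u) hs0 hs1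
    rwa [Real.one_rpow, rpow_sq_helper u hu0 r] at h
  rw [rpow_sq_helper (1 - u) h1u r, rpow_sq_helper (1 + u) h1u' r] at hconc
  have hu : 0 ≤ u ^ r := Real.rpow_nonneg hu0 r
  nlinarith [hconc, hsub]
end

section
/- Let r > 0, L ∈ [1,∞), β ∈ (0,1), and let λ : S → ℝ be measurable with 1/L ≤ λ(θ) ≤ L for all θ ∈ S. If E(λ(F(θ,e₁)) (w(θ,e₁))^r) ≤ β λ(θ) for every θ ∈ S, then for every n ≥ 1 and every θ ∈ S, E(∏_{t=1}^n (w(θ*_{t−1}, e_t))^r | θ*₀ = θ) ≤ L² β^n; in particular, limsup_{n→∞} sup_{θ∈S} (E(∏_{t=1}^n (w(θ*_{t−1}, e_t))^r | θ*₀ = θ))^{1/n} ≤ β < 1. -/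
open MeasureTheory ProbabilityTheory Finset
open scoped ENNReal

/-- The Markov chain `θ*₀ = θ`, `θ*_t = F(θ*_{t−1}, e_t)` driven by the sequence
`(e_t)_{t≥1}` (here `e t : Ω → ℝ` represents `e_{t+1}`). -/
def chainF {S Ω : Type*} (F : S → ℝ → S) (e : ℕ → Ω → ℝ) (θ : S) : ℕ → Ω → S
  | 0, _ => θ
  | t + 1, ω => F (chainF F e θ t ω) (e t ω)

def chainP {S : Type*} (F : S → ℝ → S) (θ : S) : ℕ → (ℕ → ℝ) → S :=
  chainF F (fun s p => p s) θ

lemma chainF_eq_chainP {S Ω : Type*} (F : S → ℝ → S) (e : ℕ → Ω → ℝ) (θ : S) (t : ℕ) (ω : Ω) :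
    chainF F e θ t ω = chainP F θ t (fun s => e s ω) := by
  induction t with
  | zero => rfl
  | succ t ih => show F _ _ = F _ _; rw [ih]; rfl

lemma chainP_congr {S : Type*} (F : S → ℝ → S) (θ : S) (t : ℕ) (p q : ℕ → ℝ)
    (h : ∀ s < t, p s = q s) :
    chainP F θ t p = chainP F θ t q := by
  induction t with
  | zero => rfl
  | succ t ih =>
    have h1 : chainP F θ t p = chainP F θ t q := ih fun s hs => h s (hs.trans t.lt_succ_self)
    show F (chainP F θ t p) (p t) = F (chainP F θ t q) (q t)
    rw [h1, h t t.lt_succ_self]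

lemma chainP_measurable {S : Type*} [MeasurableSpace S] {F : S → ℝ → S}
    (hF : Measurable (Function.uncurry F)) (θ : S) (t : ℕ) :
    Measurable (chainP F θ t) := by
  induction t with
  | zero => exact measurable_const
  | succ t ih =>
    have : chainP F θ (t + 1) = fun p => Function.uncurry F (chainP F θ t p, p t) := rfl
    rw [this]
    exact hF.comp (ih.prodMk (measurable_pi_apply t))

lemma chainF_measurable {S Ω : Type*} [MeasurableSpace S] [MeasurableSpace Ω] {F : S → ℝ → S}
    (hF : Measurable (Function.uncurry F)) {e : ℕ → Ω → ℝ} (he : ∀ t, Measurable (e t))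
    (θ : S) (t : ℕ) : Measurable (chainF F e θ t) := by
  induction t with
  | zero => exact measurable_const
  | succ t ih =>
    have : chainF F e θ (t + 1) = fun ω => Function.uncurry F (chainF F e θ t ω, e t ω) := rfl
    rw [this]
    exact hF.comp (ih.prodMk (he t))

lemma step_lemma {S Ω : Type*} [MeasurableSpace S] [MeasurableSpace Ω]
    (μ : Measure Ω) [IsProbabilityMeasure μ]
    (F : S → ℝ → S) (hF : Measurable (Function.uncurry F))
    (w : S → ℝ → ℝ) (hw : Measurable (Function.uncurry w))
    (e : ℕ → Ω → ℝ) (he : ∀ t, Measurable (e t))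
    (hindep : iIndepFun e μ)
    (hident : ∀ t, μ.map (e t) = μ.map (e 0))
    (r β : ℝ) (hr : 0 ≤ r) (hβ0 : 0 < β)
    (lam : S → ℝ) (hlam : Measurable lam) (hlam0 : ∀ θ, 0 ≤ lam θ)
    (hdrift : ∀ θ, ∫⁻ ω, ENNReal.ofReal (lam (F θ (e 0 ω)) * w θ (e 0 ω) ^ r) ∂μ
      ≤ ENNReal.ofReal (β * lam θ))
    (n : ℕ) (θ : S) :
    ∫⁻ ω, (∏ t ∈ Finset.range (n+1), ENNReal.ofReal (w (chainF F e θ t ω) (e t ω) ^ r)) *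
        ENNReal.ofReal (lam (chainF F e θ (n+1) ω)) ∂μ
    ≤ ENNReal.ofReal β *
      ∫⁻ ω, (∏ t ∈ Finset.range n, ENNReal.ofReal (w (chainF F e θ t ω) (e t ω) ^ r)) *
        ENNReal.ofReal (lam (chainF F e θ n ω)) ∂μ := by
  classical
  set X : Ω → ({x // x ∈ Finset.range n} → ℝ) := fun ω i => e i ω with hXdef
  set pf : ({x // x ∈ Finset.range n} → ℝ) → (ℕ → ℝ) :=
    fun v s => if h : s ∈ Finset.range n then v ⟨s, h⟩ else 0 with hpfdef
  have hpf : Measurable pf := by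
    refine measurable_pi_lambda _ fun s => ?_
    by_cases h : s ∈ Finset.range n
    · simp only [hpfdef, dif_pos h]; exact measurable_pi_apply _
    · simp only [hpfdef, dif_neg h]; exact measurable_const
  have hXmeas : Measurable X := measurable_pi_lambda _ fun i => he i
  set c : ({x // x ∈ Finset.range n} → ℝ) → S := fun v => chainP F θ n (pf v) with hcdef
  have hc : Measurable c := (chainP_measurable hF θ n).comp hpf
  set H : ({x // x ∈ Finset.range n} → ℝ) → ℝ≥0∞ :=
    fun v => ∏ t ∈ Finset.range n,
      ENNReal.ofReal (w (chainP F θ t (pf v)) (pf v t) ^ r) with hHdef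
  have hrpow : Measurable fun x : ℝ => x ^ r := (Real.continuous_rpow_const hr).measurable
  have hwm : ∀ t : ℕ, Measurable fun v : ({x // x ∈ Finset.range n} → ℝ) =>
      ENNReal.ofReal (w (chainP F θ t (pf v)) (pf v t) ^ r) := fun t =>
    ENNReal.measurable_ofReal.comp <| hrpow.comp
      (hw.comp (((chainP_measurable hF θ t).comp hpf).prodMk
        ((measurable_pi_apply t).comp hpf)))
  have hH : Measurable H := Finset.measurable_prod _ fun t _ => hwm t
  set G : ({x // x ∈ Finset.range n} → ℝ) × ℝ → ℝ≥0∞ :=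
    fun q => H q.1 * ENNReal.ofReal (lam (F (c q.1) q.2) * w (c q.1) q.2 ^ r) with hGdef
  have hG : Measurable G := by
    apply (hH.comp measurable_fst).mul
    apply ENNReal.measurable_ofReal.comp
    exact ((hlam.comp (hF.comp ((hc.comp measurable_fst).prodMk measurable_snd))).mul
      (hrpow.comp (hw.comp ((hc.comp measurable_fst).prodMk measurable_snd))))
  -- chain reconstruction
  have hpfe : ∀ ω, ∀ t, t ∈ Finset.range n → pf (X ω) t = e t ω := by
    intro ω t ht; simp only [hpfdef, dif_pos ht]; rfl
  have hchain : ∀ ω, ∀ t, t ≤ n → chainP F θ t (pf (X ω)) = chainF F e θ t ω := by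
    intro ω t ht
    rw [chainF_eq_chainP F e θ t ω]
    exact chainP_congr F θ t _ _ fun s hs =>
      hpfe ω s (Finset.mem_range.2 (lt_of_lt_of_le hs ht))
  have hkey : ∀ ω, (∏ t ∈ Finset.range (n+1),
        ENNReal.ofReal (w (chainF F e θ t ω) (e t ω) ^ r)) *
        ENNReal.ofReal (lam (chainF F e θ (n+1) ω)) = G (X ω, e n ω) := by
    intro ω
    have hHX : H (X ω) = ∏ t ∈ Finset.range n,
        ENNReal.ofReal (w (chainF F e θ t ω) (e t ω) ^ r) := by
      refine Finset.prod_congr rfl fun t ht => ?_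
      rw [hchain ω t (Finset.mem_range.1 ht).le, hpfe ω t ht]
    have hcX : c (X ω) = chainF F e θ n ω := hchain ω n le_rfl
    have hsucc : chainF F e θ (n+1) ω = F (chainF F e θ n ω) (e n ω) := rfl
    simp only [hGdef, hHX, hcX, hsucc, Finset.prod_range_succ,
      ENNReal.ofReal_mul (hlam0 _)]
    ring
  have hind : IndepFun X (e n) μ := by
    have h := hindep.indepFun_finset (Finset.range n) {n}
      (by simp only [Finset.disjoint_left, Finset.mem_range, Finset.mem_singleton]; omega) he
    have h2 := h.comp measurable_id
      (measurable_pi_apply (⟨n, Finset.mem_singleton_self n⟩ : ({n} : Finset ℕ)))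
    exact h2
  have hmap : μ.map (fun ω => (X ω, e n ω)) = (μ.map X).prod (μ.map (e n)) :=
    (indepFun_iff_map_prod_eq_prod_map_map hXmeas.aemeasurable (he n).aemeasurable).1 hind
  have hPX : IsProbabilityMeasure (μ.map X) := Measure.isProbabilityMeasure_map hXmeas.aemeasurable
  have hPe : IsProbabilityMeasure (μ.map (e n)) := Measure.isProbabilityMeasure_map (he n).aemeasurable
  have hinner : ∀ x, ∫⁻ y, ENNReal.ofReal (lam (F (c x) y) * w (c x) y ^ r) ∂(μ.map (e n))
      ≤ ENNReal.ofReal β * ENNReal.ofReal (lam (c x)) := by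
    intro x
    have hm : Measurable fun y : ℝ => ENNReal.ofReal (lam (F (c x) y) * w (c x) y ^ r) := by
      have h1 : Measurable fun y : ℝ => (c x, y) :=
        measurable_const.prodMk measurable_id
      exact ENNReal.measurable_ofReal.comp
        (((hlam.comp hF.of_uncurry_left).comp measurable_id).mul
          (hrpow.comp hw.of_uncurry_left))
    rw [hident n, lintegral_map hm (he 0), ← ENNReal.ofReal_mul hβ0.le]
    exact hdrift (c x)
  calc
    ∫⁻ ω, (∏ t ∈ Finset.range (n+1), ENNReal.ofReal (w (chainF F e θ t ω) (e t ω) ^ r)) *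
        ENNReal.ofReal (lam (chainF F e θ (n+1) ω)) ∂μ
      = ∫⁻ ω, G (X ω, e n ω) ∂μ := by
        exact lintegral_congr hkey
    _ = ∫⁻ q, G q ∂(μ.map (fun ω => (X ω, e n ω))) :=
        (lintegral_map hG (hXmeas.prodMk (he n))).symm
    _ = ∫⁻ q, G q ∂((μ.map X).prod (μ.map (e n))) := by rw [hmap]
    _ = ∫⁻ x, ∫⁻ y, G (x, y) ∂(μ.map (e n)) ∂(μ.map X) := lintegral_prod _ hG.aemeasurable
    _ = ∫⁻ x, H x * ∫⁻ y, ENNReal.ofReal (lam (F (c x) y) * w (c x) y ^ r)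
          ∂(μ.map (e n)) ∂(μ.map X) := by
        refine lintegral_congr fun x => ?_
        simp only [hGdef]
        refine lintegral_const_mul _ ?_
        exact ENNReal.measurable_ofReal.comp
          (((hlam.comp hF.of_uncurry_left).comp measurable_id).mul
            (hrpow.comp hw.of_uncurry_left))
    _ ≤ ∫⁻ x, H x * (ENNReal.ofReal β * ENNReal.ofReal (lam (c x))) ∂(μ.map X) :=
        lintegral_mono fun x => mul_le_mul_right (hinner x) _
    _ = ENNReal.ofReal β * ∫⁻ x, H x * ENNReal.ofReal (lam (c x)) ∂(μ.map X) := by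
        have hm2 : Measurable fun x => H x * ENNReal.ofReal (lam (c x)) :=
          hH.mul (ENNReal.measurable_ofReal.comp (hlam.comp hc))
        rw [← lintegral_const_mul _ hm2]
        exact lintegral_congr fun x => by ring
    _ = ENNReal.ofReal β * ∫⁻ ω, H (X ω) * ENNReal.ofReal (lam (c (X ω))) ∂μ := by
        have hm2 : Measurable fun x => H x * ENNReal.ofReal (lam (c x)) :=
          hH.mul (ENNReal.measurable_ofReal.comp (hlam.comp hc))
        rw [lintegral_map hm2 hXmeas]
    _ = ENNReal.ofReal β * ∫⁻ ω, (∏ t ∈ Finset.range n,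
          ENNReal.ofReal (w (chainF F e θ t ω) (e t ω) ^ r)) *
          ENNReal.ofReal (lam (chainF F e θ n ω)) ∂μ := by
        congr 1
        refine lintegral_congr fun ω => ?_
        simp only [hHdef, hcdef]
        rw [hchain ω n le_rfl]
        congr 1
        refine Finset.prod_congr rfl fun t ht => ?_
        rw [hchain ω t (Finset.mem_range.1 ht).le, hpfe ω t ht]

/-- Let `r > 0`, `L ∈ [1,∞)`, `β ∈ (0,1)` and `λ : S → ℝ` measurable
with `1/L ≤ λ ≤ L`.  If `E(λ(F(θ,e₁)) (w(θ,e₁))^r) ≤ β λ(θ)` for every `θ`, then for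
every `n ≥ 1` and every `θ`, `E(∏_{t=1}^n (w(θ*_{t−1}, e_t))^r | θ*₀ = θ) ≤ L² βⁿ`;
in particular `limsup_n sup_θ (E(∏_{t=1}^n (w(θ*_{t−1},e_t))^r | θ*₀ = θ))^{1/n} ≤ β < 1`.
(Expectations of nonnegative quantities are written as lower integrals in `ℝ≥0∞`.) -/
theorem stmt6 {S Ω : Type*} [MeasurableSpace S] [MeasurableSpace Ω]
    (μ : Measure Ω) [IsProbabilityMeasure μ]
    (F : S → ℝ → S) (hF : Measurable (Function.uncurry F))
    (w : S → ℝ → ℝ) (hw : Measurable (Function.uncurry w)) (hw0 : ∀ θ u, 0 ≤ w θ u)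
    (e : ℕ → Ω → ℝ) (he : ∀ t, Measurable (e t))
    (hindep : iIndepFun e μ)
    (hident : ∀ t, μ.map (e t) = μ.map (e 0))
    (r L β : ℝ) (hr : 0 < r) (hL : 1 ≤ L) (hβ0 : 0 < β) (hβ1 : β < 1)
    (lam : S → ℝ) (hlam : Measurable lam)
    (hlamlb : ∀ θ, 1 / L ≤ lam θ) (hlamub : ∀ θ, lam θ ≤ L)
    (hdrift : ∀ θ, ∫⁻ ω, ENNReal.ofReal (lam (F θ (e 0 ω)) * w θ (e 0 ω) ^ r) ∂μ
      ≤ ENNReal.ofReal (β * lam θ)) :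
    (∀ n : ℕ, 1 ≤ n → ∀ θ : S,
        ∫⁻ ω, ∏ t ∈ Finset.range n,
            ENNReal.ofReal (w (chainF F e θ t ω) (e t ω) ^ r) ∂μ
          ≤ ENNReal.ofReal (L ^ 2 * β ^ n)) ∧
      Filter.limsup (fun n : ℕ => ⨆ θ : S,
          (∫⁻ ω, ∏ t ∈ Finset.range n,
              ENNReal.ofReal (w (chainF F e θ t ω) (e t ω) ^ r) ∂μ) ^ (1 / (n : ℝ)))
        Filter.atTop ≤ ENNReal.ofReal β := by
  have hL0 : (0:ℝ) < L := lt_of_lt_of_le one_pos hL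
  have hlam0 : ∀ θ, 0 ≤ lam θ := fun θ =>
    le_trans (le_of_lt (div_pos one_pos hL0)) (hlamlb θ)
  -- the Lyapunov-weighted quantity
  set A : ℕ → S → ℝ≥0∞ := fun n θ =>
    ∫⁻ ω, (∏ t ∈ Finset.range n, ENNReal.ofReal (w (chainF F e θ t ω) (e t ω) ^ r)) *
      ENNReal.ofReal (lam (chainF F e θ n ω)) ∂μ with hAdef
  have hA : ∀ n θ, A n θ ≤ ENNReal.ofReal β ^ n * ENNReal.ofReal L := by
    intro n
    induction n with
    | zero =>
      intro θ
      simp only [hAdef, Finset.range_zero, Finset.prod_empty, one_mul, pow_zero]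
      have : chainF F e θ 0 = fun _ => θ := rfl
      rw [this, lintegral_const, measure_univ, mul_one]
      exact ENNReal.ofReal_le_ofReal (hlamub θ)
    | succ n ih =>
      intro θ
      calc A (n+1) θ ≤ ENNReal.ofReal β * A n θ :=
            step_lemma μ F hF w hw e he hindep hident r β hr.le hβ0 lam hlam hlam0 hdrift n θ
        _ ≤ ENNReal.ofReal β * (ENNReal.ofReal β ^ n * ENNReal.ofReal L) :=
            mul_le_mul_right (ih θ) _
        _ = ENNReal.ofReal β ^ (n+1) * ENNReal.ofReal L := by ring
  have part1 : ∀ n : ℕ, ∀ θ : S,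
      ∫⁻ ω, ∏ t ∈ Finset.range n,
          ENNReal.ofReal (w (chainF F e θ t ω) (e t ω) ^ r) ∂μ
        ≤ ENNReal.ofReal (L ^ 2 * β ^ n) := by
    intro n θ
    have hpt : ∀ ω, (∏ t ∈ Finset.range n,
        ENNReal.ofReal (w (chainF F e θ t ω) (e t ω) ^ r))
        ≤ ENNReal.ofReal L * ((∏ t ∈ Finset.range n,
            ENNReal.ofReal (w (chainF F e θ t ω) (e t ω) ^ r)) *
          ENNReal.ofReal (lam (chainF F e θ n ω))) := by
      intro ω
      have h1 : (1:ℝ≥0∞) ≤ ENNReal.ofReal L * ENNReal.ofReal (lam (chainF F e θ n ω)) := by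
        rw [← ENNReal.ofReal_mul hL0.le, ← ENNReal.ofReal_one]
        apply ENNReal.ofReal_le_ofReal
        have := hlamlb (chainF F e θ n ω)
        calc (1:ℝ) = L * (1/L) := by field_simp
          _ ≤ L * lam (chainF F e θ n ω) := by
              exact mul_le_mul_of_nonneg_left this hL0.le
      calc (∏ t ∈ Finset.range n, ENNReal.ofReal (w (chainF F e θ t ω) (e t ω) ^ r))
          = (∏ t ∈ Finset.range n, ENNReal.ofReal (w (chainF F e θ t ω) (e t ω) ^ r)) * 1 := by
            rw [mul_one]
        _ ≤ (∏ t ∈ Finset.range n, ENNReal.ofReal (w (chainF F e θ t ω) (e t ω) ^ r)) *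
              (ENNReal.ofReal L * ENNReal.ofReal (lam (chainF F e θ n ω))) :=
            mul_le_mul_right h1 _
        _ = ENNReal.ofReal L * ((∏ t ∈ Finset.range n,
              ENNReal.ofReal (w (chainF F e θ t ω) (e t ω) ^ r)) *
            ENNReal.ofReal (lam (chainF F e θ n ω))) := by ring
    calc ∫⁻ ω, ∏ t ∈ Finset.range n,
          ENNReal.ofReal (w (chainF F e θ t ω) (e t ω) ^ r) ∂μ
        ≤ ∫⁻ ω, ENNReal.ofReal L * ((∏ t ∈ Finset.range n,
            ENNReal.ofReal (w (chainF F e θ t ω) (e t ω) ^ r)) *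
          ENNReal.ofReal (lam (chainF F e θ n ω))) ∂μ := lintegral_mono hpt
      _ = ENNReal.ofReal L * A n θ := by
          rw [hAdef]
          refine lintegral_const_mul _ ?_
          have hrpow : Measurable fun x : ℝ => x ^ r :=
            (Real.continuous_rpow_const hr.le).measurable
          refine Measurable.mul ?_ ?_
          · exact Finset.measurable_prod _ fun t _ =>
              ENNReal.measurable_ofReal.comp (hrpow.comp
                (hw.comp ((chainF_measurable hF he θ t).prodMk (he t))))
          · exact ENNReal.measurable_ofReal.comp
              (hlam.comp (chainF_measurable hF he θ n))
      _ ≤ ENNReal.ofReal L * (ENNReal.ofReal β ^ n * ENNReal.ofReal L) :=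
          mul_le_mul_right (hA n θ) _
      _ = ENNReal.ofReal (L ^ 2 * β ^ n) := by
          rw [← ENNReal.ofReal_pow hβ0.le,
            ← ENNReal.ofReal_mul (by positivity : (0:ℝ) ≤ β ^ n),
            ← ENNReal.ofReal_mul hL0.le]
          congr 1
          ring
  refine ⟨fun n _ θ => part1 n θ, ?_⟩
  -- the limsup part
  set g : ℕ → ℝ≥0∞ := fun n =>
    ENNReal.ofReal ((L ^ 2) ^ (1 / (n : ℝ))) * ENNReal.ofReal β with hgdef
  have hL2 : (0:ℝ) < L ^ 2 := by positivity
  have hfg : ∀ n : ℕ, 1 ≤ n → (⨆ θ : S,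
      (∫⁻ ω, ∏ t ∈ Finset.range n,
          ENNReal.ofReal (w (chainF F e θ t ω) (e t ω) ^ r) ∂μ) ^ (1 / (n : ℝ))) ≤ g n := by
    intro n hn
    have hnR : ((n : ℝ)) ≠ 0 := Nat.cast_ne_zero.2 (Nat.one_le_iff_ne_zero.1 hn)
    have hex : (0:ℝ) ≤ 1 / (n:ℝ) := by positivity
    refine iSup_le fun θ => ?_
    calc (∫⁻ ω, ∏ t ∈ Finset.range n,
            ENNReal.ofReal (w (chainF F e θ t ω) (e t ω) ^ r) ∂μ) ^ (1 / (n : ℝ))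
        ≤ (ENNReal.ofReal (L ^ 2 * β ^ n)) ^ (1 / (n : ℝ)) :=
          ENNReal.rpow_le_rpow (part1 n θ) hex
      _ = g n := by
          rw [ENNReal.ofReal_mul hL2.le, ENNReal.mul_rpow_of_ne_top
            ENNReal.ofReal_ne_top ENNReal.ofReal_ne_top,
            ENNReal.ofReal_rpow_of_pos hL2, hgdef]
          congr 1
          rw [ENNReal.ofReal_pow hβ0.le, ← ENNReal.rpow_natCast (ENNReal.ofReal β) n,
            ← ENNReal.rpow_mul]
          rw [mul_one_div, div_self hnR, ENNReal.rpow_one]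
  have hgtend : Filter.Tendsto g Filter.atTop (nhds (ENNReal.ofReal β)) := by
    have h1 : Filter.Tendsto (fun n : ℕ => (L ^ 2) ^ (1 / (n : ℝ)))
        Filter.atTop (nhds 1) := by
      have h2 : Filter.Tendsto (fun n : ℕ => Real.log (L ^ 2) * (1 / (n : ℝ)))
          Filter.atTop (nhds 0) := by
        simpa only [mul_zero] using
          tendsto_one_div_atTop_nhds_zero_nat.const_mul (Real.log (L ^ 2))
      have h3 := (Real.continuous_exp.tendsto 0).comp h2
      simp only [Function.comp_def, Real.exp_zero] at h3
      refine h3.congr fun n => ?_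
      rw [← Real.rpow_def_of_pos hL2]
    have h4 : Filter.Tendsto (fun n : ℕ => ENNReal.ofReal ((L ^ 2) ^ (1 / (n : ℝ))))
        Filter.atTop (nhds (ENNReal.ofReal 1)) :=
      (ENNReal.continuous_ofReal.tendsto 1).comp h1
    have h5 := ENNReal.Tendsto.mul_const h4
      (Or.inr (ENNReal.ofReal_ne_top : ENNReal.ofReal β ≠ ⊤))
    rw [hgdef]
    simpa [ENNReal.ofReal_one] using h5
  calc Filter.limsup (fun n : ℕ => ⨆ θ : S,
        (∫⁻ ω, ∏ t ∈ Finset.range n,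
            ENNReal.ofReal (w (chainF F e θ t ω) (e t ω) ^ r) ∂μ) ^ (1 / (n : ℝ)))
        Filter.atTop ≤ Filter.limsup g Filter.atTop := by
        refine Filter.limsup_le_limsup ?_
        filter_upwards [Filter.eventually_ge_atTop 1] with n hn
        exact hfg n hn
    _ = ENNReal.ofReal β := hgtend.limsup_eq
end

section
/- Let r > 0, δ > 0 and n ≥ 1. For t ≥ 1 set Q_t = (δ + w(θ*_{t−1}, e_t))^r and q_t(θ) = E(Q_t ⋯ Q₁ | θ*₀ = θ). Suppose K₆ := sup_{θ∈S} E((δ + w(θ, e₁))^r) < ∞ and β := sup_{θ∈S} q_n(θ) < 1. Define λ(θ) = ∏_{t=1}^{n−1} (q_t(θ))^{1/n}. Then δ^{r(n−1)/2} ≤ λ(θ) ≤ K₆^{(n−1)/2} for all θ ∈ S, and for every θ ∈ S, E(λ(F(θ, e₁)) (w(θ, e₁))^r) ≤ β^{1/n} λ(θ). -/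
open MeasureTheory ProbabilityTheory Finset

/-- Deterministic version of the chain, driven by a sequence of reals. -/
def chainD {S : Type*} (F : S → ℝ → S) (x : S) (v : ℕ → ℝ) : ℕ → S
  | 0 => x
  | s + 1 => F (chainD F x v s) (v s)

lemma chainD_congr {S : Type*} (F : S → ℝ → S) (x : S) {v v' : ℕ → ℝ} {t : ℕ}
    (h : ∀ k < t, v k = v' k) : ∀ s, s ≤ t → chainD F x v s = chainD F x v' s := by
  intro s
  induction s with
  | zero => intro _; rfl
  | succ s ih =>
    intro hs
    rw [chainD, chainD, ih (Nat.le_of_succ_le hs), h s (Nat.lt_of_lt_of_le (Nat.lt_succ_self s) hs)]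

lemma chainD_shift {S : Type*} (F : S → ℝ → S) (x : S) (v : ℕ → ℝ) :
    ∀ s, chainD F x v (s + 1) = chainD F (F x (v 0)) (fun k => v (k + 1)) s := by
  intro s
  induction s with
  | zero => rfl
  | succ s ih => rw [chainD, ih]; rfl

lemma chainF_eq_chainD {S Ω : Type*} (F : S → ℝ → S) (e : ℕ → Ω → ℝ) (θ : S) (s : ℕ) (ω : Ω) :
    chainF F e θ s ω = chainD F θ (fun k => e k ω) s := by
  induction s with
  | zero => rfl
  | succ s ih => rw [chainF, chainD, ih]

lemma measurable_chainD {S : Type*} [MeasurableSpace S] {F : S → ℝ → S}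
    (hF : Measurable (Function.uncurry F)) (s : ℕ) :
    Measurable (fun p : S × (ℕ → ℝ) => chainD F p.1 p.2 s) := by
  induction s with
  | zero => exact measurable_fst
  | succ s ih =>
    exact hF.comp (ih.prodMk ((measurable_pi_apply s).comp measurable_snd))

lemma prod_rpow_sum {c : ENNReal} (hc0 : c ≠ 0) (hct : c ≠ ⊤) (s : Finset ℕ) (p : ℕ → ℝ) :
    ∏ t ∈ s, c ^ p t = c ^ (∑ t ∈ s, p t) := by
  classical
  induction s using Finset.induction with
  | empty => simp
  | insert _ _ hi ih =>
    rw [Finset.prod_insert hi, Finset.sum_insert hi, ih, ENNReal.rpow_add _ _ hc0 hct]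

lemma sum_Icc_id_cast (m : ℕ) : ∑ t ∈ Finset.Icc 1 m, (t : ℝ) = m * (m + 1) / 2 := by
  induction m with
  | zero => simp
  | succ m ih =>
    rw [Finset.sum_Icc_succ_top (by omega), ih]
    push_cast
    ring

/-- Extension of a finite vector to a sequence. -/
def extD (t : ℕ) (v : Fin t → ℝ) : ℕ → ℝ := fun k => if h : k < t then v ⟨k, h⟩ else 0

lemma measurable_extD (t : ℕ) : Measurable (extD t) := by
  apply measurable_pi_lambda
  intro k
  unfold extD
  by_cases h : k < t
  · simpa [h] using measurable_pi_apply (⟨k, h⟩ : Fin t)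
  · simp [h]

/-- The one-step weight. -/
noncomputable def gQ {S : Type*} (w : S → ℝ → ℝ) (δ r : ℝ) (x : S) (u : ℝ) : ENNReal :=
  ENNReal.ofReal ((δ + w x u) ^ r)

/-- The product of weights along the deterministic chain. -/
noncomputable def PQ {S : Type*} (F : S → ℝ → S) (w : S → ℝ → ℝ) (δ r : ℝ) (t : ℕ) (x : S)
    (v : ℕ → ℝ) : ENNReal :=
  ∏ s ∈ Finset.range t, gQ w δ r (chainD F x v s) (v s)

section lems

variable {S : Type*} [MeasurableSpace S] {F : S → ℝ → S} {w : S → ℝ → ℝ} {δ r : ℝ}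

lemma measurable_gQ (hw : Measurable (Function.uncurry w)) (hr : 0 ≤ r) :
    Measurable (fun p : S × ℝ => gQ w δ r p.1 p.2) := by
  apply ENNReal.measurable_ofReal.comp
  exact (Real.continuous_rpow_const hr).measurable.comp (measurable_const.add hw)

lemma measurable_PQ (hF : Measurable (Function.uncurry F))
    (hw : Measurable (Function.uncurry w)) (hr : 0 ≤ r) (t : ℕ) :
    Measurable (fun p : S × (ℕ → ℝ) => PQ F w δ r t p.1 p.2) := by
  apply Finset.measurable_prod
  intro s _
  exact (measurable_gQ hw hr).comp
    ((measurable_chainD hF s).prodMk ((measurable_pi_apply s).comp measurable_snd))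

lemma PQ_congr (t : ℕ) (x : S) {v v' : ℕ → ℝ} (h : ∀ k < t, v k = v' k) :
    PQ F w δ r t x v = PQ F w δ r t x v' := by
  apply Finset.prod_congr rfl
  intro s hs
  rw [Finset.mem_range] at hs
  rw [chainD_congr F x h s hs.le, h s hs]

lemma PQ_succ (t : ℕ) (x : S) (v : ℕ → ℝ) :
    PQ F w δ r (t + 1) x v = gQ w δ r x (v 0) * PQ F w δ r t (F x (v 0)) (fun k => v (k + 1)) := by
  rw [PQ, Finset.prod_range_succ', mul_comm]
  congr 1
  apply Finset.prod_congr rfl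
  intro s _
  rw [chainD_shift]

end lems

set_option maxHeartbeats 8000000

/-- Let `r > 0`, `δ > 0`, `n ≥ 1`.  With `Q_t = (δ + w(θ*_{t−1},e_t))^r`
and `q_t(θ) = E(Q_t ⋯ Q₁ | θ*₀ = θ)`, suppose `K₆ := sup_θ E((δ + w(θ,e₁))^r) < ∞` and
`β := sup_θ q_n(θ) < 1` (formalized by: `K₆` is a finite upper bound of `q₁` and `β < 1`
is an upper bound of `q_n`).  Define `λ(θ) = ∏_{t=1}^{n−1} (q_t(θ))^{1/n}`.  Then
`δ^{r(n−1)/2} ≤ λ(θ) ≤ K₆^{(n−1)/2}` and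
`E(λ(F(θ,e₁)) (w(θ,e₁))^r) ≤ β^{1/n} λ(θ)` for every `θ`.
(Expectations of nonnegative quantities are lower integrals, valued in `ℝ≥0∞`.) -/
theorem stmt7 {S Ω : Type*} [MeasurableSpace S] [MeasurableSpace Ω]
    (μ : Measure Ω) [IsProbabilityMeasure μ]
    (F : S → ℝ → S) (hF : Measurable (Function.uncurry F))
    (w : S → ℝ → ℝ) (hw : Measurable (Function.uncurry w)) (hw0 : ∀ θ u, 0 ≤ w θ u)
    (e : ℕ → Ω → ℝ) (he : ∀ t, Measurable (e t))
    (hindep : iIndepFun e μ)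
    (hident : ∀ t, μ.map (e t) = μ.map (e 0))
    (n : ℕ) (hn : 1 ≤ n) (r δ : ℝ) (hr : 0 < r) (hδ : 0 < δ)
    (q : ℕ → S → ENNReal)
    (hq : ∀ t θ, q t θ = ∫⁻ ω, ∏ s ∈ Finset.range t,
        ENNReal.ofReal ((δ + w (chainF F e θ s ω) (e s ω)) ^ r) ∂μ)
    (K₆ : ENNReal) (hK₆top : K₆ ≠ ⊤) (hK₆ : ∀ θ, q 1 θ ≤ K₆)
    (β : ENNReal) (hβ : ∀ θ, q n θ ≤ β) (hβ1 : β < 1)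
    (lam : S → ENNReal)
    (hlam : ∀ θ, lam θ = ∏ t ∈ Finset.Icc 1 (n - 1), q t θ ^ (1 / (n : ℝ))) :
    (∀ θ : S, ENNReal.ofReal (δ ^ (r * ((n : ℝ) - 1) / 2)) ≤ lam θ ∧
        lam θ ≤ K₆ ^ (((n : ℝ) - 1) / 2)) ∧
      ∀ θ : S, ∫⁻ ω, lam (F θ (e 0 ω)) * ENNReal.ofReal (w θ (e 0 ω) ^ r) ∂μ
        ≤ β ^ (1 / (n : ℝ)) * lam θ := by
  classical
  haveI hν : IsProbabilityMeasure (μ.map (e 0)) := Measure.isProbabilityMeasure_map (he 0).aemeasurable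
  have hgm : Measurable (fun p : S × ℝ => gQ w δ r p.1 p.2) := measurable_gQ hw hr.le
  have hgm1 : ∀ x : S, Measurable (gQ w δ r x) := fun x =>
    Measurable.comp (f := fun u : ℝ => (x, u)) hgm (measurable_const.prodMk measurable_id)
  have hPm : ∀ t, Measurable (fun p : S × (ℕ → ℝ) => PQ F w δ r t p.1 p.2) :=
    measurable_PQ hF hw hr.le
  have hPm2 : ∀ t x, Measurable (fun v : ℕ → ℝ => PQ F w δ r t x v) := by
    intro t x
    simp only [PQ]
    apply Finset.measurable_prod
    intro s _
    exact (measurable_gQ hw hr.le).comp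
      (((measurable_chainD hF s).comp measurable_prodMk_left).prodMk (measurable_pi_apply s))
  have hqP : ∀ t x, q t x = ∫⁻ ω, PQ F w δ r t x (fun k => e k ω) ∂μ := by
    intro t x
    rw [hq]
    apply lintegral_congr
    intro ω
    apply Finset.prod_congr rfl
    intro s _
    rw [chainF_eq_chainD]
    rfl
  have hvecm : ∀ k t, Measurable (fun ω (i : Fin t) => e (k + (i : ℕ)) ω) :=
    fun k t => measurable_pi_lambda _ fun i => he _
  have hlaw : ∀ k t, μ.map (fun ω (i : Fin t) => e (k + (i : ℕ)) ω)
      = Measure.pi (fun _ : Fin t => μ.map (e 0)) := by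
    intro k t
    refine (Measure.pi_eq fun s hs => ?_).symm
    rw [Measure.map_apply (hvecm k t) (MeasurableSet.univ_pi hs)]
    have hpre : (fun ω (i : Fin t) => e (k + (i : ℕ)) ω) ⁻¹' Set.pi Set.univ s
        = ⋂ i ∈ (Finset.univ : Finset (Fin t)), e (k + (i : ℕ)) ⁻¹' s i := by
      ext ω; simp [Set.mem_pi]
    set sets : ℕ → Set ℝ := fun j => if h : j - k < t then s ⟨j - k, h⟩ else Set.univ with hsets
    have hsets_eq : ∀ i : Fin t, sets (k + (i : ℕ)) = s i := by
      intro i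
      simp [hsets, Nat.add_sub_cancel_left, i.isLt]
    have hmeasS : ∀ j ∈ Finset.image (fun i : Fin t => k + (i : ℕ)) Finset.univ,
        MeasurableSet (sets j) := by
      intro j _
      simp only [hsets]
      split
      · exact hs _
      · exact MeasurableSet.univ
    have hmain := hindep.measure_inter_preimage_eq_mul
      (Finset.image (fun i : Fin t => k + (i : ℕ)) Finset.univ) hmeasS
    have hinj : ∀ a ∈ (Finset.univ : Finset (Fin t)), ∀ b ∈ (Finset.univ : Finset (Fin t)),
        k + (a : ℕ) = k + (b : ℕ) → a = b := by
      intro a _ b _ h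
      exact Fin.ext (Nat.add_left_cancel h)
    rw [Finset.set_biInter_finset_image, Finset.prod_image hinj] at hmain
    rw [hpre]
    have hiter : ⋂ i ∈ (Finset.univ : Finset (Fin t)), e (k + (i : ℕ)) ⁻¹' s i
        = ⋂ i ∈ (Finset.univ : Finset (Fin t)), e (k + (i : ℕ)) ⁻¹' sets (k + (i : ℕ)) := by
      apply Set.iInter₂_congr
      intro i _
      rw [hsets_eq i]
    rw [hiter, hmain]
    apply Finset.prod_congr rfl
    intro i _
    rw [hsets_eq i, ← Measure.map_apply (he _) (hs i), hident]
  have hqpi : ∀ t x, q t x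
      = ∫⁻ v, PQ F w δ r t x (extD t v) ∂(Measure.pi (fun _ : Fin t => μ.map (e 0))) := by
    intro t x
    have hm : Measurable (fun v : Fin t → ℝ => PQ F w δ r t x (extD t v)) :=
      (hPm2 t x).comp (measurable_extD t)
    rw [hqP t x, ← hlaw 0 t, lintegral_map hm (hvecm 0 t)]
    apply lintegral_congr
    intro ω
    apply PQ_congr
    intro kk hk
    simp [extD, hk]
  have hq0 : ∀ x, q 0 x = 1 := by
    intro x
    rw [hqP]
    simp [PQ]
  have hq1 : ∀ x, q 1 x = ∫⁻ ω, gQ w δ r x (e 0 ω) ∂μ := by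
    intro x
    rw [hqP]
    apply lintegral_congr
    intro ω
    rw [PQ, Finset.prod_range_one]
    rfl
  have hqm : ∀ t, Measurable (q t) := by
    intro t
    have hg2 : Measurable (fun p : S × Ω => (p.1, fun k => e k p.2)) :=
      measurable_fst.prodMk ((measurable_pi_lambda _ fun k => he k).comp measurable_snd)
    have hm : Measurable (fun p : S × Ω => PQ F w δ r t p.1 (fun k => e k p.2)) :=
      Measurable.comp (f := fun p : S × Ω => (p.1, fun k => e k p.2)) (hPm t) hg2
    have h2 : Measurable fun x : S => ∫⁻ ω, PQ F w δ r t x (fun k => e k ω) ∂μ :=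
      Measurable.lintegral_prod_right' hm
    have heq : q t = fun x => ∫⁻ ω, PQ F w δ r t x (fun k => e k ω) ∂μ := funext (hqP t)
    rw [heq]
    exact h2
  -- The key one-step recursion.
  have key : ∀ t x, q (t + 1) x = ∫⁻ ω, gQ w δ r x (e 0 ω) * q t (F x (e 0 ω)) ∂μ := by
    intro t x
    set Y : Ω → (Fin t → ℝ) := fun ω (i : Fin t) => e (1 + (i : ℕ)) ω with hYdef
    have hYm : Measurable Y := hvecm 1 t
    have hmapY : μ.map Y = Measure.pi (fun _ : Fin t => μ.map (e 0)) := hlaw 1 t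
    haveI : IsProbabilityMeasure (μ.map Y) := by rw [hmapY]; infer_instance
    have hFx : Measurable (F x) :=
      Measurable.comp (f := fun u : ℝ => (x, u)) hF (measurable_const.prodMk measurable_id)
    have hHm : Measurable (fun p : ℝ × (Fin t → ℝ) =>
        gQ w δ r x p.1 * PQ F w δ r t (F x p.1) (extD t p.2)) := by
      apply Measurable.mul
      · exact (hgm1 x).comp measurable_fst
      · exact (hPm t).comp
          ((hFx.comp measurable_fst).prodMk ((measurable_extD t).comp measurable_snd))
    have hstep : ∀ ω, PQ F w δ r (t + 1) x (fun k => e k ω)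
        = gQ w δ r x (e 0 ω) * PQ F w δ r t (F x (e 0 ω)) (extD t (Y ω)) := by
      intro ω
      rw [PQ_succ]
      congr 1
      apply PQ_congr
      intro k hk
      simp [extD, hk, hYdef, Nat.add_comm 1 k]
    have hdisj : Disjoint ({0} : Finset ℕ) (Finset.image (fun i => 1 + i) (Finset.range t)) := by
      simp only [Finset.disjoint_left, Finset.mem_singleton, Finset.mem_image, Finset.mem_range]
      rintro a rfl
      rintro ⟨i, -, h⟩
      omega
    have hIF := hindep.indepFun_finset {0} (Finset.image (fun i => 1 + i) (Finset.range t))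
      hdisj he
    have hmem0 : (0 : ℕ) ∈ ({0} : Finset ℕ) := Finset.mem_singleton_self 0
    have hmemT : ∀ i : Fin t, 1 + (i : ℕ) ∈ Finset.image (fun i => 1 + i) (Finset.range t) :=
      fun i => Finset.mem_image.mpr ⟨i, Finset.mem_range.mpr i.isLt, rfl⟩
    have hindXY : IndepFun (e 0) Y μ := by
      exact hIF.comp (φ := fun v : ({0} : Finset ℕ) → ℝ => v ⟨0, hmem0⟩)
        (ψ := fun (v : (Finset.image (fun i => 1 + i) (Finset.range t) : Finset ℕ) → ℝ)
          (i : Fin t) => v ⟨1 + (i : ℕ), hmemT i⟩)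
        (measurable_pi_apply _) (measurable_pi_lambda _ fun i => measurable_pi_apply _)
    have hmapXY : μ.map (fun ω => (e 0 ω, Y ω)) = (μ.map (e 0)).prod (μ.map Y) :=
      (indepFun_iff_map_prod_eq_prod_map_map (he 0).aemeasurable hYm.aemeasurable).mp hindXY
    have hmul : Measurable (fun u : ℝ => gQ w δ r x u * q t (F x u)) :=
      (hgm1 x).mul ((hqm t).comp hFx)
    calc q (t + 1) x
        = ∫⁻ ω, gQ w δ r x (e 0 ω) * PQ F w δ r t (F x (e 0 ω)) (extD t (Y ω)) ∂μ := by
          rw [hqP]; exact lintegral_congr hstep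
      _ = ∫⁻ p, gQ w δ r x p.1 * PQ F w δ r t (F x p.1) (extD t p.2)
            ∂(μ.map fun ω => (e 0 ω, Y ω)) :=
          (lintegral_map hHm ((he 0).prodMk hYm)).symm
      _ = ∫⁻ p, gQ w δ r x p.1 * PQ F w δ r t (F x p.1) (extD t p.2)
            ∂((μ.map (e 0)).prod (μ.map Y)) := by rw [hmapXY]
      _ = ∫⁻ u, ∫⁻ v, gQ w δ r x u * PQ F w δ r t (F x u) (extD t v)
            ∂(μ.map Y) ∂(μ.map (e 0)) := lintegral_prod _ hHm.aemeasurable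
      _ = ∫⁻ u, gQ w δ r x u * q t (F x u) ∂(μ.map (e 0)) := by
          apply lintegral_congr
          intro u
          have hmeas2 : Measurable (fun v : Fin t → ℝ => PQ F w δ r t (F x u) (extD t v)) :=
            Measurable.comp (f := extD t) (hPm2 t (F x u)) (measurable_extD t)
          rw [lintegral_const_mul _ hmeas2]
          congr 1
          rw [hqpi t (F x u), hmapY]
      _ = ∫⁻ ω, gQ w δ r x (e 0 ω) * q t (F x (e 0 ω)) ∂μ := lintegral_map hmul (he 0)
  -- bounds on q
  have hc0 : (0 : ENNReal) < ENNReal.ofReal (δ ^ r) := by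
    rw [ENNReal.ofReal_pos]
    exact Real.rpow_pos_of_pos hδ r
  have hglow : ∀ (x : S) (u : ℝ), ENNReal.ofReal (δ ^ r) ≤ gQ w δ r x u := by
    intro x u
    apply ENNReal.ofReal_le_ofReal
    exact Real.rpow_le_rpow hδ.le (by linarith [hw0 x u]) hr.le
  have hqlow : ∀ t x, ENNReal.ofReal (δ ^ r) ^ t ≤ q t x := by
    intro t
    induction t with
    | zero => intro x; rw [hq0, pow_zero]
    | succ t ih =>
      intro x
      rw [key]
      calc ENNReal.ofReal (δ ^ r) ^ (t + 1)
          = ∫⁻ _, ENNReal.ofReal (δ ^ r) * ENNReal.ofReal (δ ^ r) ^ t ∂μ := by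
            rw [lintegral_const, measure_univ, mul_one, pow_succ, mul_comm]
        _ ≤ _ := lintegral_mono fun ω => mul_le_mul' (hglow _ _) (ih _)
  have hqup : ∀ t x, q t x ≤ K₆ ^ t := by
    intro t
    induction t with
    | zero => intro x; rw [hq0, pow_zero]
    | succ t ih =>
      intro x
      rw [key]
      calc ∫⁻ ω, gQ w δ r x (e 0 ω) * q t (F x (e 0 ω)) ∂μ
          ≤ ∫⁻ ω, gQ w δ r x (e 0 ω) * K₆ ^ t ∂μ :=
            lintegral_mono fun ω => mul_le_mul' le_rfl (ih _)
        _ = (∫⁻ ω, gQ w δ r x (e 0 ω) ∂μ) * K₆ ^ t :=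
            lintegral_mul_const _ ((hgm1 x).comp (he 0))
        _ = q 1 x * K₆ ^ t := by rw [hq1]
        _ ≤ K₆ * K₆ ^ t := mul_le_mul' (hK₆ x) le_rfl
        _ = K₆ ^ (t + 1) := by rw [pow_succ, mul_comm]
  obtain ⟨m, rfl⟩ : ∃ m, n = m + 1 := ⟨n - 1, (Nat.succ_pred_eq_of_pos hn).symm⟩
  have hNn : ((m : ℝ) + 1) ≠ 0 := by positivity
  have hNcast : (((m + 1 : ℕ) : ℝ)) = (m : ℝ) + 1 := by push_cast; ring
  have hsumIcc : ∑ t ∈ Finset.Icc 1 m, (t : ℝ) = m * (m + 1) / 2 := sum_Icc_id_cast m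
  have hlam' : ∀ x, ∏ i ∈ Finset.range m, q (i + 1) x ^ (1 / ((m + 1 : ℕ) : ℝ)) = lam x := by
    intro x
    rw [hlam x]
    have h1 : (m + 1) - 1 = m := rfl
    rw [h1, ← Finset.Ico_add_one_right_eq_Icc, Finset.prod_Ico_eq_prod_range]
    apply Finset.prod_congr (by simp)
    intro i _
    rw [Nat.add_comm]
  constructor
  · intro θ
    have hK0 : K₆ ≠ 0 := by
      intro h
      have h1 : ENNReal.ofReal (δ ^ r) ^ 1 ≤ K₆ := (hqlow 1 θ).trans (hK₆ θ)
      rw [pow_one, h] at h1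
      exact absurd (le_antisymm h1 zero_le) (ne_of_gt hc0)
    constructor
    · -- lower bound
      have hxne0 : (ENNReal.ofReal δ) ≠ 0 := ne_of_gt (ENNReal.ofReal_pos.mpr hδ)
      have hxnet : (ENNReal.ofReal δ) ≠ ⊤ := ENNReal.ofReal_ne_top
      have hterm : ∀ t : ℕ, (ENNReal.ofReal (δ ^ r) ^ t) ^ (1 / ((m + 1 : ℕ) : ℝ))
          = (ENNReal.ofReal δ) ^ (r * t * (1 / ((m + 1 : ℕ) : ℝ))) := by
        intro t
        rw [← ENNReal.ofReal_rpow_of_pos hδ, ← ENNReal.rpow_natCast (ENNReal.ofReal δ ^ r) t,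
          ← ENNReal.rpow_mul, ← ENNReal.rpow_mul, ← mul_assoc]
      have hexp : ∑ t ∈ Finset.Icc 1 m, (r * (t : ℝ) * (1 / ((m + 1 : ℕ) : ℝ)))
          = r * (((m + 1 : ℕ) : ℝ) - 1) / 2 := by
        have h2 : ∑ t ∈ Finset.Icc 1 m, (r * (t : ℝ) * (1 / ((m + 1 : ℕ) : ℝ)))
            = (∑ t ∈ Finset.Icc 1 m, (t : ℝ)) * (r * (1 / ((m + 1 : ℕ) : ℝ))) := by
          rw [Finset.sum_mul]
          apply Finset.sum_congr rfl
          intros; ring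
        rw [h2, hsumIcc, hNcast]
        field_simp
        ring
      have hprod : ∏ t ∈ Finset.Icc 1 m, (ENNReal.ofReal (δ ^ r) ^ t) ^ (1 / ((m + 1 : ℕ) : ℝ))
          = ENNReal.ofReal (δ ^ (r * (((m + 1 : ℕ) : ℝ) - 1) / 2)) := by
        simp only [hterm]
        rw [prod_rpow_sum hxne0 hxnet, hexp, ENNReal.ofReal_rpow_of_pos hδ]
      calc ENNReal.ofReal (δ ^ (r * (((m + 1 : ℕ) : ℝ) - 1) / 2))
          = ∏ t ∈ Finset.Icc 1 m, (ENNReal.ofReal (δ ^ r) ^ t) ^ (1 / ((m + 1 : ℕ) : ℝ)) :=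
            hprod.symm
        _ ≤ ∏ t ∈ Finset.Icc 1 m, q t θ ^ (1 / ((m + 1 : ℕ) : ℝ)) := by
            apply Finset.prod_le_prod'
            intro t _
            exact ENNReal.rpow_le_rpow (hqlow t θ) (by positivity)
        _ = lam θ := (hlam θ).symm
    · -- upper bound
      have hterm : ∀ t : ℕ, (K₆ ^ t) ^ (1 / ((m + 1 : ℕ) : ℝ))
          = K₆ ^ ((t : ℝ) * (1 / ((m + 1 : ℕ) : ℝ))) := by
        intro t
        rw [← ENNReal.rpow_natCast K₆ t, ← ENNReal.rpow_mul]
      have hexp : ∑ t ∈ Finset.Icc 1 m, ((t : ℝ) * (1 / ((m + 1 : ℕ) : ℝ)))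
          = (((m + 1 : ℕ) : ℝ) - 1) / 2 := by
        rw [← Finset.sum_mul, hsumIcc, hNcast]
        field_simp
        ring
      calc lam θ = ∏ t ∈ Finset.Icc 1 m, q t θ ^ (1 / ((m + 1 : ℕ) : ℝ)) := hlam θ
        _ ≤ ∏ t ∈ Finset.Icc 1 m, (K₆ ^ t) ^ (1 / ((m + 1 : ℕ) : ℝ)) := by
            apply Finset.prod_le_prod'
            intro t _
            exact ENNReal.rpow_le_rpow (hqup t θ) (by positivity)
        _ = K₆ ^ ((((m + 1 : ℕ) : ℝ) - 1) / 2) := by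
            simp only [hterm]
            rw [prod_rpow_sum hK0 hK₆top, hexp]
  · intro θ
    have hFθ : Measurable (F θ) :=
      Measurable.comp (f := fun u : ℝ => (θ, u)) hF (measurable_const.prodMk measurable_id)
    have step1 : ∫⁻ ω, lam (F θ (e 0 ω)) * ENNReal.ofReal (w θ (e 0 ω) ^ r) ∂μ
        ≤ ∫⁻ ω, lam (F θ (e 0 ω)) * gQ w δ r θ (e 0 ω) ∂μ := by
      apply lintegral_mono
      intro ω
      apply mul_le_mul' le_rfl
      apply ENNReal.ofReal_le_ofReal
      exact Real.rpow_le_rpow (hw0 _ _) (by linarith [hw0 θ (e 0 ω)]) hr.le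
    have hone : (1 / ((m + 1 : ℕ) : ℝ)) * ((m + 1 : ℕ) : ℝ) = 1 := by
      rw [hNcast]
      field_simp
    have hlamprod : ∀ u : ℝ, lam (F θ u) * gQ w δ r θ u
        = ∏ t ∈ Finset.range (m + 1), (q t (F θ u) * gQ w δ r θ u) ^ (1 / ((m + 1 : ℕ) : ℝ)) := by
      intro u
      have h1 : ∏ t ∈ Finset.range (m + 1), (q t (F θ u) * gQ w δ r θ u) ^ (1 / ((m + 1 : ℕ) : ℝ))
          = (∏ t ∈ Finset.range (m + 1), q t (F θ u) ^ (1 / ((m + 1 : ℕ) : ℝ)))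
            * ∏ _t ∈ Finset.range (m + 1), (gQ w δ r θ u) ^ (1 / ((m + 1 : ℕ) : ℝ)) := by
        rw [← Finset.prod_mul_distrib]
        apply Finset.prod_congr rfl
        intros
        rw [ENNReal.mul_rpow_of_nonneg _ _ (by positivity)]
      rw [h1]
      have h2 : ∏ t ∈ Finset.range (m + 1), q t (F θ u) ^ (1 / ((m + 1 : ℕ) : ℝ))
          = lam (F θ u) := by
        rw [Finset.prod_range_succ', hq0, ENNReal.one_rpow, mul_one, hlam' (F θ u)]
      have h3 : ∏ _t ∈ Finset.range (m + 1), (gQ w δ r θ u) ^ (1 / ((m + 1 : ℕ) : ℝ))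
          = gQ w δ r θ u := by
        rw [Finset.prod_const, Finset.card_range,
          ← ENNReal.rpow_natCast ((gQ w δ r θ u) ^ (1 / ((m + 1 : ℕ) : ℝ))) (m + 1),
          ← ENNReal.rpow_mul, hone, ENNReal.rpow_one]
      rw [h2, h3]
    have hfm : ∀ t : ℕ, Measurable (fun ω => q t (F θ (e 0 ω)) * gQ w δ r θ (e 0 ω)) :=
      fun t => ((hqm t).comp (hFθ.comp (he 0))).mul ((hgm1 θ).comp (he 0))
    have hsum1 : ∑ _t ∈ Finset.range (m + 1), (1 / ((m + 1 : ℕ) : ℝ)) = 1 := by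
      rw [Finset.sum_const, Finset.card_range, nsmul_eq_mul, mul_one_div, hNcast]
      field_simp
    have hold := ENNReal.lintegral_prod_norm_pow_le (μ := μ) (Finset.range (m + 1))
      (f := fun t ω => q t (F θ (e 0 ω)) * gQ w δ r θ (e 0 ω))
      (fun t _ => (hfm t).aemeasurable)
      (p := fun _ => 1 / ((m + 1 : ℕ) : ℝ)) hsum1 (fun _ _ => by positivity)
    have hint : ∀ t : ℕ, ∫⁻ ω, q t (F θ (e 0 ω)) * gQ w δ r θ (e 0 ω) ∂μ = q (t + 1) θ := by
      intro t
      rw [key]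
      apply lintegral_congr
      intro ω
      rw [mul_comm]
    calc ∫⁻ ω, lam (F θ (e 0 ω)) * ENNReal.ofReal (w θ (e 0 ω) ^ r) ∂μ
        ≤ ∫⁻ ω, lam (F θ (e 0 ω)) * gQ w δ r θ (e 0 ω) ∂μ := step1
      _ = ∫⁻ ω, ∏ t ∈ Finset.range (m + 1),
            (q t (F θ (e 0 ω)) * gQ w δ r θ (e 0 ω)) ^ (1 / ((m + 1 : ℕ) : ℝ)) ∂μ :=
          lintegral_congr fun ω => hlamprod (e 0 ω)
      _ ≤ ∏ t ∈ Finset.range (m + 1),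
            (∫⁻ ω, q t (F θ (e 0 ω)) * gQ w δ r θ (e 0 ω) ∂μ) ^ (1 / ((m + 1 : ℕ) : ℝ)) := hold
      _ = ∏ t ∈ Finset.range (m + 1), (q (t + 1) θ) ^ (1 / ((m + 1 : ℕ) : ℝ)) := by
          apply Finset.prod_congr rfl
          intro t _
          rw [hint]
      _ = (q (m + 1) θ) ^ (1 / ((m + 1 : ℕ) : ℝ)) * lam θ := by
          rw [Finset.prod_range_succ, hlam' θ, mul_comm]
      _ ≤ β ^ (1 / ((m + 1 : ℕ) : ℝ)) * lam θ :=
          mul_le_mul' (ENNReal.rpow_le_rpow (hβ θ) (by positivity)) le_rfl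
end

section
/- Let (S, 𝒮) be a measurable space, κ a Markov kernel on S, and μ a κ-invariant probability measure on S, i.e. μ(A) = ∫_S κ(θ, A) μ(dθ) for every A ∈ 𝒮. Let ν : S → ℝ be bounded and measurable and h : S → ℝ be measurable and μ-integrable, where (κν)(θ) = ∫_S ν dκ(θ,·). If sup_{θ∈S} ((κν)(θ) − ν(θ) + h(θ)) < 0, then ∫_S h dμ < 0. -/
/-!
Invariance of `μ` says `κ ∘ₘ μ = μ`, so integrating `κν` against `μ` gives back `∫ ν dμ`.
Integrating the drift bound `κν - ν + h ≤ c` against the probability measure `μ` then leaves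
`∫ h dμ ≤ c < 0`.
-/

open MeasureTheory ProbabilityTheory

namespace MeasureTheory.Measure

variable {α β E : Type*} {mα : MeasurableSpace α} {mβ : MeasurableSpace β}
  [NormedAddCommGroup E] [NormedSpace ℝ E] {κ : Kernel α β} {μ : Measure α} {f : β → E}

lemma integrable_integral_of_integrable_comp (hf : Integrable f (κ ∘ₘ μ)) :
    Integrable (fun x ↦ ∫ y, f y ∂κ x) μ := by
  rw [comp_eq_comp_const_apply] at hf
  simpa using hf.integral_comp

lemma integral_comp (hf : Integrable f (κ ∘ₘ μ)) :
    ∫ y, f y ∂(κ ∘ₘ μ) = ∫ x, ∫ y, f y ∂κ x ∂μ := by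
  rw [comp_eq_comp_const_apply] at hf ⊢
  simpa using Kernel.integral_comp hf

lemma comp_eq_self_of_forall_apply_eq_lintegral {κ : Kernel α α}
    (hinv : ∀ A : Set α, MeasurableSet A → μ A = ∫⁻ x, κ x A ∂μ) : κ ∘ₘ μ = μ := by
  ext A hA
  rw [bind_apply hA κ.aemeasurable, hinv A hA]

lemma integral_integral_eq_of_comp_eq_self {κ : Kernel α α} {f : α → E} (hμ : κ ∘ₘ μ = μ)
    (hf : Integrable f μ) : ∫ x, ∫ y, f y ∂κ x ∂μ = ∫ x, f x ∂μ := by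
  rw [← hμ] at hf
  conv_rhs => rw [← hμ]
  exact (integral_comp hf).symm

lemma integrable_integral_of_comp_eq_self {κ : Kernel α α} {f : α → E} (hμ : κ ∘ₘ μ = μ)
    (hf : Integrable f μ) : Integrable (fun x ↦ ∫ y, f y ∂κ x) μ := by
  rw [← hμ] at hf
  exact integrable_integral_of_integrable_comp hf

end MeasureTheory.Measure

theorem stmt8_general {S : Type*} [MeasurableSpace S] (κ : Kernel S S)
    (μ : Measure S) [IsProbabilityMeasure μ]
    (hinv : ∀ A : Set S, MeasurableSet A → μ A = ∫⁻ θ, κ θ A ∂μ)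
    (ν : S → ℝ) (hν : Measurable ν) (Cν : ℝ) (hνb : ∀ θ, |ν θ| ≤ Cν)
    (h : S → ℝ) (hint : Integrable h μ)
    (hsup : ∃ c : ℝ, c < 0 ∧ ∀ θ, (∫ s, ν s ∂(κ θ)) - ν θ + h θ ≤ c) :
    ∫ θ, h θ ∂μ < 0 := by
  obtain ⟨c, hc, hdrift⟩ := hsup
  have hμ : κ ∘ₘ μ = μ := Measure.comp_eq_self_of_forall_apply_eq_lintegral hinv
  have hνμ : Integrable ν μ := .of_bound hν.aestronglyMeasurable Cν (.of_forall hνb)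
  have hcνμ : Integrable (fun θ ↦ c + ν θ) μ := (integrable_const c).add hνμ
  have hκνμ := Measure.integrable_integral_of_comp_eq_self hμ hνμ
  calc ∫ θ, h θ ∂μ ≤ ∫ θ, (c + ν θ - ∫ s, ν s ∂κ θ) ∂μ :=
        integral_mono hint (hcνμ.sub hκνμ) fun θ ↦ by linarith [hdrift θ]
    _ = c := by
        rw [integral_sub hcνμ hκνμ,
          integral_add (integrable_const c) hνμ,
          Measure.integral_integral_eq_of_comp_eq_self hμ hνμ]
        simp
    _ < 0 := hc

/-- Let `κ` be a Markov kernel on `S` and `μ` a `κ`-invariant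
probability measure, i.e. `μ(A) = ∫ κ(θ,A) μ(dθ)` for every measurable `A`.  Let
`ν : S → ℝ` be bounded measurable and `h : S → ℝ` measurable and `μ`-integrable.
If `sup_θ ((κν)(θ) − ν(θ) + h(θ)) < 0`, then `∫ h dμ < 0`. -/
theorem stmt8 {S : Type*} [MeasurableSpace S] (κ : Kernel S S) [IsMarkovKernel κ]
    (μ : Measure S) [IsProbabilityMeasure μ]
    (hinv : ∀ A : Set S, MeasurableSet A → μ A = ∫⁻ θ, κ θ A ∂μ)
    (ν : S → ℝ) (hν : Measurable ν) (Cν : ℝ) (hνb : ∀ θ, |ν θ| ≤ Cν)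
    (h : S → ℝ) (hh : Measurable h) (hint : Integrable h μ)
    (hsup : ∃ c : ℝ, c < 0 ∧ ∀ θ, (∫ s, ν s ∂(κ θ)) - ν θ + h θ ≤ c) :
    ∫ θ, h θ ∂μ < 0 :=
  stmt8_general κ μ hinv ν hν Cν hνb h hint hsup
end

section
/- Let e be a real random variable whose law has a Lebesgue density f with L₀ := sup_{u∈ℝ} (1+|u|) f(u) < ∞. Let α ∈ ℝ and β ≥ 0 with max(|α|, β) > 0, and let 0 < ε < max(|α|, β)/2. Then P(|α + β e| ≤ ε) ≤ 4 L₀ ε / max(|α|, β). -/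
open MeasureTheory

/-- Let `e` be a real random variable whose law has a Lebesgue density
`f` with `L₀ := sup_u (1+|u|) f(u) < ∞` (formalized: `L₀` is an upper bound).  Let
`α ∈ ℝ`, `β ≥ 0` with `max(|α|,β) > 0`, and `0 < ε < max(|α|,β)/2`.  Then
`P(|α + β e| ≤ ε) ≤ 4 L₀ ε / max(|α|,β)`. -/
theorem stmt9 {Ω : Type*} [MeasurableSpace Ω] (μ : Measure Ω) [IsProbabilityMeasure μ]
    (e : Ω → ℝ) (he : Measurable e)
    (f : ℝ → ℝ) (hf0 : ∀ u, 0 ≤ f u) (hfm : Measurable f)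
    (hlaw : μ.map e = volume.withDensity (fun u => ENNReal.ofReal (f u)))
    (L₀ : ℝ) (hL₀ : ∀ u, (1 + |u|) * f u ≤ L₀)
    (α β ε : ℝ) (hβ : 0 ≤ β) (hmax : 0 < max |α| β)
    (hε0 : 0 < ε) (hε : ε < max |α| β / 2) :
    μ {ω | |α + β * e ω| ≤ ε} ≤ ENNReal.ofReal (4 * L₀ * ε / max |α| β) := by
  have hL0 : 0 ≤ L₀ := by nlinarith [hL₀ 0, hf0 0, abs_nonneg (0:ℝ)]
  rcases hβ.eq_or_lt with hβ0 | hβpos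
  · -- β = 0 : the event is empty
    have hα : max |α| β = |α| := by
      rw [← hβ0]; exact max_eq_left (abs_nonneg α)
    have hempty : {ω | |α + β * e ω| ≤ ε} = ∅ := by
      ext ω
      simp only [Set.mem_setOf_eq, Set.mem_empty_iff_false, iff_false, not_le, ← hβ0,
        zero_mul, add_zero]
      rw [hα] at hε
      linarith
    rw [hempty]
    simp
  · -- β > 0
    set M := max |α| β with hMdef
    have hβM : β ≤ M := le_max_right _ _
    have hIcc : {x : ℝ | |α + β * x| ≤ ε} = Set.Icc ((-ε - α)/β) ((ε - α)/β) := by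
      ext x
      rw [Set.mem_setOf_eq, Set.mem_Icc, abs_le, div_le_iff₀ hβpos, le_div_iff₀ hβpos]
      constructor <;> rintro ⟨h1, h2⟩ <;> constructor <;> nlinarith
    have hS : MeasurableSet {x : ℝ | |α + β * x| ≤ ε} := by
      rw [hIcc]; exact measurableSet_Icc
    have key : μ {ω | |α + β * e ω| ≤ ε}
        = ∫⁻ x in {x : ℝ | |α + β * x| ≤ ε}, ENNReal.ofReal (f x) := by
      have : {ω | |α + β * e ω| ≤ ε} = e ⁻¹' {x : ℝ | |α + β * x| ≤ ε} := rfl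
      rw [this, ← Measure.map_apply he hS, hlaw, withDensity_apply _ hS]
    rw [key]
    have hbound : ∀ x ∈ {x : ℝ | |α + β * x| ≤ ε},
        ENNReal.ofReal (f x) ≤ ENNReal.ofReal (2 * β * L₀ / M) := by
      intro x hx
      apply ENNReal.ofReal_le_ofReal
      have h1 : M ≤ (1 + |x|) * (2 * β) := by
        rcases max_cases |α| β with ⟨hM1, hM2⟩ | ⟨hM1, hM2⟩
        · -- M = |α|, β ≤ |α|
          have habs : |α| ≤ |α + β * x| + |β * x| := by
            have h := abs_add_le (α + β * x) (-(β * x))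
            rw [abs_neg] at h
            have : α + β * x + -(β * x) = α := by ring
            rwa [this] at h
          have hβx : |β * x| = β * |x| := by
            rw [abs_mul, abs_of_pos hβpos]
          rw [hβx] at habs
          have hx' : |α + β * x| ≤ ε := hx
          have hMα : M = |α| := hM1
          rw [hMα] at hε ⊢
          nlinarith [abs_nonneg x]
        · -- M = β
          have hMβ : M = β := hM1
          rw [hMβ]
          nlinarith [abs_nonneg x, mul_nonneg hβ (abs_nonneg x)]
      rw [le_div_iff₀ hmax]
      nlinarith [mul_le_mul_of_nonneg_left (hL₀ x) hβpos.le,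
        mul_le_mul_of_nonneg_left h1 (hf0 x)]
    have hvol : volume {x : ℝ | |α + β * x| ≤ ε} = ENNReal.ofReal (2 * ε / β) := by
      rw [hIcc, Real.volume_Icc]
      congr 1
      field_simp
      ring
    calc ∫⁻ x in {x : ℝ | |α + β * x| ≤ ε}, ENNReal.ofReal (f x)
        ≤ ∫⁻ _ in {x : ℝ | |α + β * x| ≤ ε}, ENNReal.ofReal (2 * β * L₀ / M) :=
          setLIntegral_mono (by measurability) hbound
      _ = ENNReal.ofReal (2 * β * L₀ / M) * volume {x : ℝ | |α + β * x| ≤ ε} := by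
          rw [setLIntegral_const]
      _ = ENNReal.ofReal (4 * L₀ * ε / M) := by
          rw [hvol, ← ENNReal.ofReal_mul (by positivity)]
          congr 1
          field_simp
          ring
end

section
/- For every ε₁ ∈ (0,1) there exists a compact set C₁ ⊆ {θ ∈ Θ : θ_i ≠ 0 for all i = 1,…,p} such that: (i) P(θ*₁ ∈ C₁ | θ*₀ = θ) > 1 − ε₁ for every θ ∈ C₁; and (ii) P(θ*_p ∈ C₁ | θ*₀ = θ) > 1 − p ε₁ for every θ ∈ Θ. -/
open MeasureTheory ProbabilityTheory Finset
open scoped ENNReal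

/-- The Euclidean norm on `ℝ^k` (realized as `Fin k → ℝ`). -/
noncomputable def euclNorm {k : ℕ} (x : Fin k → ℝ) : ℝ := Real.sqrt (∑ i, x i ^ 2)

/-- The Euclidean unit sphere `Θ = {θ ∈ ℝ^p : ‖θ‖ = 1}` with `p = n+1`. -/
abbrev Sph (n : ℕ) : Type := { θ : Fin (n + 1) → ℝ // euclNorm θ = 1 }

/-- The chain as a measurable function of the first `t` innovations. -/
def chainG {S : Type*} (F : S → ℝ → S) (θ : S) : (t : ℕ) → (Fin t → ℝ) → S
  | 0, _ => θ
  | t + 1, v => F (chainG F θ t (v ∘ Fin.castSucc)) (v (Fin.last t))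

lemma measurable_chainG {S : Type*} [MeasurableSpace S] {F : S → ℝ → S}
    (hFm : Measurable (Function.uncurry F)) (θ : S) :
    ∀ t, Measurable (chainG F θ t)
  | 0 => measurable_const
  | t + 1 => by
    have ih := measurable_chainG hFm θ t
    have h1 : Measurable fun v : Fin (t + 1) → ℝ => v ∘ Fin.castSucc :=
      measurable_pi_lambda _ fun i => measurable_pi_apply _
    exact hFm.comp ((ih.comp h1).prodMk (measurable_pi_apply _))

lemma chainF_eq_chainG {S Ω : Type*} (F : S → ℝ → S) (e : ℕ → Ω → ℝ) (θ : S) :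
    ∀ (t : ℕ) (ω : Ω), chainF F e θ t ω = chainG F θ t (fun i : Fin t => e i ω)
  | 0, ω => rfl
  | t + 1, ω => by
    show F (chainF F e θ t ω) (e t ω) = _
    rw [chainF_eq_chainG F e θ t ω]
    rfl

lemma indep_tuple {Ω : Type*} [MeasurableSpace Ω] {μ : Measure Ω} {e : ℕ → Ω → ℝ}
    (he : ∀ t, Measurable (e t))
    (hindep : iIndepFun (m := fun _ : ℕ => (inferInstance : MeasurableSpace ℝ)) e μ) (t : ℕ) :
    IndepFun (fun ω => fun i : Fin t => e i ω) (e t) μ := by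
  have h := hindep.indepFun_finset (Finset.range t) {t}
    (by simp [Finset.disjoint_singleton_right]) he
  have hφ : Measurable fun (g : ↥(Finset.range t) → ℝ) =>
      fun i : Fin t => g ⟨(i : ℕ), Finset.mem_range.mpr i.isLt⟩ :=
    measurable_pi_lambda _ fun i => measurable_pi_apply _
  have hψ : Measurable fun (g : ↥({t} : Finset ℕ) → ℝ) => g ⟨t, Finset.mem_singleton_self t⟩ :=
    measurable_pi_apply _
  exact h.comp hφ hψ

/-- Coordinates are bounded by the euclidean norm. -/
lemma abs_coord_le_euclNorm {k : ℕ} (x : Fin k → ℝ) (i : Fin k) : |x i| ≤ euclNorm x := by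
  rw [euclNorm, ← Real.sqrt_sq_eq_abs]
  exact Real.sqrt_le_sqrt (Finset.single_le_sum (fun j _ => sq_nonneg (x j)) (Finset.mem_univ i))

lemma sum_sq_eq_one {n : ℕ} (θ : Sph n) : ∑ j, ((θ : Fin (n+1) → ℝ) j) ^ 2 = 1 := by
  have h := θ.2
  rw [euclNorm, Real.sqrt_eq_one] at h
  exact h

instance sph_compactSpace (n : ℕ) : CompactSpace (Sph n) := by
  have hcont : Continuous (euclNorm (k := n+1)) := by
    unfold euclNorm
    exact Real.continuous_sqrt.comp (continuous_finset_sum _ fun i _ => (continuous_apply i).pow 2)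
  have h1 : IsCompact {x : Fin (n+1) → ℝ | euclNorm x = 1} := by
    apply Metric.isCompact_of_isClosed_isBounded
    · exact isClosed_eq hcont continuous_const
    · rw [isBounded_iff_forall_norm_le]
      refine ⟨1, fun x hx => ?_⟩
      rw [pi_norm_le_iff_of_nonneg zero_le_one]
      intro i
      have := abs_coord_le_euclNorm x i
      rw [hx] at this
      simpa using this
  exact isCompact_iff_compactSpace.mp h1

/-- In the collapsed-chain setup on the unit sphere `Θ ⊂ ℝ^p`
(`p = n+1`, `z(θ,u) = a_*(θ) + b_*(θ)u`, `w(θ,u) = ‖(z(θ,u),θ₁,…,θ_{p−1})‖`,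
`F(θ,u)` the normalized shifted vector, `(e_t)` i.i.d. with density `f` satisfying
`sup_u (1+|u|)f(u) < ∞`, `a_*, b_*` bounded Borel, `b_* ≥ 0`,
`inf_θ max(|a_*(θ)|, b_*(θ)) > 0`): for every `ε₁ ∈ (0,1)` there exists a compact
`C₁ ⊆ {θ ∈ Θ : θᵢ ≠ 0 ∀i}` such that (i) `P(θ*₁ ∈ C₁ | θ*₀ = θ) > 1 − ε₁` for all
`θ ∈ C₁`, and (ii) `P(θ*_p ∈ C₁ | θ*₀ = θ) > 1 − p ε₁` for all `θ ∈ Θ`. -/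
theorem stmt10 {Ω : Type*} [MeasurableSpace Ω] (μ : Measure Ω) [IsProbabilityMeasure μ]
    (n : ℕ)
    (e : ℕ → Ω → ℝ) (he : ∀ t, Measurable (e t))
    (hindep : iIndepFun (m := fun _ : ℕ => (inferInstance : MeasurableSpace ℝ)) e μ)
    (f : ℝ → ℝ) (hf0 : ∀ u, 0 ≤ f u) (hfm : Measurable f)
    (hlaw : ∀ t, μ.map (e t) = volume.withDensity (fun u => ENNReal.ofReal (f u)))
    (L₀ : ℝ) (hL₀ : ∀ u, (1 + |u|) * f u ≤ L₀)
    (a b : Sph n → ℝ) (ham : Measurable a) (hbm : Measurable b) (hb0 : ∀ θ, 0 ≤ b θ)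
    (L₂ : ℝ) (hL₂ : ∀ θ, max |a θ| (b θ) ≤ L₂)
    (L₁ : ℝ) (hL₁0 : 0 < L₁) (hL₁ : ∀ θ, L₁ ≤ max |a θ| (b θ))
    (z : Sph n → ℝ → ℝ) (hz : ∀ θ u, z θ u = a θ + b θ * u)
    (w : Sph n → ℝ → ℝ)
    (hw : ∀ θ u, w θ u =
      euclNorm (Fin.cons (z θ u) (fun i : Fin n => (θ : Fin (n + 1) → ℝ) i.castSucc)))
    (θ0 : Sph n) (F : Sph n → ℝ → Sph n) (hFm : Measurable (Function.uncurry F))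
    (hF : ∀ θ u, w θ u ≠ 0 → (F θ u : Fin (n + 1) → ℝ) =
      (w θ u)⁻¹ • (Fin.cons (z θ u) (fun i : Fin n => (θ : Fin (n + 1) → ℝ) i.castSucc) :
        Fin (n + 1) → ℝ))
    (hF0 : ∀ θ u, w θ u = 0 → F θ u = θ0) :
    ∀ ε₁ : ℝ, 0 < ε₁ → ε₁ < 1 →
      ∃ C₁ : Set (Sph n), IsCompact C₁ ∧
        (∀ θ ∈ C₁, ∀ i, (θ : Fin (n + 1) → ℝ) i ≠ 0) ∧
        (∀ θ ∈ C₁, ENNReal.ofReal (1 - ε₁) < μ {ω | chainF F e θ 1 ω ∈ C₁}) ∧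
        (∀ θ : Sph n,
          ENNReal.ofReal (1 - (n + 1 : ℝ) * ε₁) < μ {ω | chainF F e θ (n + 1) ω ∈ C₁}) := by
  intro ε₁ hε₁0 hε₁1
  -- the law of the innovations
  set ν : Measure ℝ := volume.withDensity (fun u => ENNReal.ofReal (f u)) with hν
  haveI hνP : IsProbabilityMeasure ν := by
    rw [← hlaw 0]; exact Measure.isProbabilityMeasure_map (he 0).aemeasurable
  -- basic positivity facts
  have hL₂pos : 0 < L₂ := lt_of_lt_of_le hL₁0 (le_trans (hL₁ θ0) (hL₂ θ0))
  have hL₀0 : 0 ≤ L₀ := le_trans (by simpa using (hf0 0)) (hL₀ 0)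
  have hfL₀ : ∀ u, f u ≤ L₀ := fun u =>
    le_trans (le_mul_of_one_le_left (hf0 u) (by linarith [abs_nonneg u])) (hL₀ u)
  set ε' : ℝ := ε₁ / (2 * ((n : ℝ) + 1)) with hε'
  have hn1 : (0:ℝ) < (n : ℝ) + 1 := by positivity
  have hε'0 : 0 < ε' := by positivity
  have hε'lt : ε' < ε₁ := div_lt_self hε₁0 (by linarith only [Nat.cast_nonneg (α := ℝ) n])
  have hε'half : ε' ≤ ε₁ / 2 := by
    rw [hε', div_le_div_iff₀ (by positivity) (by norm_num)]
    nlinarith only [Nat.cast_nonneg (α := ℝ) n, hε₁0]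
  -- choose the truncation level M
  obtain ⟨m, hm⟩ : ∃ m : ℕ, ν {u : ℝ | (m : ℝ) < |u|} < ENNReal.ofReal (ε' / 2) := by
    have hmeas : ∀ m : ℕ, MeasurableSet {u : ℝ | (m : ℝ) < |u|} := fun m =>
      measurableSet_lt measurable_const continuous_abs.measurable
    have hanti : Antitone fun m : ℕ => {u : ℝ | (m : ℝ) < |u|} := by
      intro m₁ m₂ h u hu
      exact lt_of_le_of_lt (Nat.cast_le.mpr h : (m₁:ℝ) ≤ m₂) hu
    have hempty : (⋂ m : ℕ, {u : ℝ | (m : ℝ) < |u|}) = ∅ := by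
      rw [Set.eq_empty_iff_forall_notMem]
      intro u hu
      obtain ⟨m, hm⟩ := exists_nat_gt |u|
      exact absurd (Set.mem_iInter.mp hu m) (not_lt.mpr hm.le)
    have htend := tendsto_measure_iInter_atTop (μ := ν)
      (fun m => (hmeas m).nullMeasurableSet) hanti ⟨0, measure_ne_top ν _⟩
    rw [hempty, measure_empty] at htend
    exact (htend.eventually_lt_const (ENNReal.ofReal_pos.mpr (by positivity))).exists
  set M : ℝ := (m : ℝ) with hM
  have hM0 : 0 ≤ M := Nat.cast_nonneg m
  set c : ℝ := L₁ / (2 * (1 + M)) with hc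
  have hc0 : 0 < c := by positivity
  have hcM : c * M ≤ L₁ / 2 := by
    rw [hc, div_mul_eq_mul_div, div_le_div_iff₀ (by positivity) (by norm_num)]
    nlinarith only [hL₁0, hM0]
  have hcL₁ : c < L₁ := by
    rw [hc, div_lt_iff₀ (by positivity)]
    nlinarith only [hL₁0, hM0]
  set η : ℝ := min (L₁ / 2) (c * ε' / (4 * (L₀ + 1))) with hη
  have hη0 : 0 < η := lt_min (by positivity) (by positivity)
  have hηL₁ : η ≤ L₁ / 2 := min_le_left _ _
  have hη2 : η * (4 * (L₀ + 1)) ≤ c * ε' := by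
    have h := min_le_right (L₁ / 2) (c * ε' / (4 * (L₀ + 1)))
    rw [← hη] at h
    calc η * (4 * (L₀ + 1)) ≤ (c * ε' / (4 * (L₀ + 1))) * (4 * (L₀ + 1)) := by
          apply mul_le_mul_of_nonneg_right h; positivity
      _ = c * ε' := by field_simp
  set K : ℝ := Real.sqrt ((L₂ * (1 + M)) ^ 2 + 1) with hK
  have hK1 : 1 ≤ K := by
    rw [hK]
    refine le_trans (le_of_eq Real.sqrt_one.symm) (Real.sqrt_le_sqrt ?_)
    linarith only [sq_nonneg (L₂ * (1 + M))]
  have hK0 : 0 < K := lt_of_lt_of_le one_pos hK1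
  set δ : ℝ := η / K ^ (n + 1) with hδ
  have hδ0 : 0 < δ := by positivity
  have hηδ : δ * K ^ (n + 1) = η := div_mul_cancel₀ η (by positivity)
  -- The compact set
  set C₁ : Set (Sph n) :=
    {θ' : Sph n | ∀ j : Fin (n + 1), δ * K ^ (n - (j : ℕ)) ≤ |(θ' : Fin (n+1) → ℝ) j|} with hC₁
  -- the bad set of innovations
  set Sbad : Set (Sph n × ℝ) :=
    {p | M < |p.2| ∨ (|p.2| ≤ M ∧ |a p.1 + b p.1 * p.2| < η)} with hSbad
  have hSbadMeas : MeasurableSet Sbad := by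
    have h2 : Measurable fun p : Sph n × ℝ => |p.2| := measurable_snd.abs
    have h3 : Measurable fun p : Sph n × ℝ => |a p.1 + b p.1 * p.2| :=
      ((ham.comp measurable_fst).add ((hbm.comp measurable_fst).mul measurable_snd)).abs
    exact (measurableSet_lt measurable_const h2).union
      ((measurableSet_le h2 measurable_const).inter (measurableSet_lt h3 measurable_const))
  ------------------------------------------------------------------
  -- deterministic one-step lemma
  ------------------------------------------------------------------
  have hstep : ∀ (θ' : Sph n) (u : ℝ), |u| ≤ M → η ≤ |z θ' u| → ∀ k : ℕ,
      (∀ j : Fin (n + 1), (j : ℕ) < k → δ * K ^ (n - (j : ℕ)) ≤ |(θ' : Fin (n+1) → ℝ) j|) →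
      ∀ j : Fin (n + 1), (j : ℕ) < k + 1 →
        δ * K ^ (n - (j : ℕ)) ≤ |((F θ' u : Sph n) : Fin (n+1) → ℝ) j| := by
    intro θ' u huM hzη k hk
    have hzabs : |z θ' u| ≤ L₂ * (1 + M) := by
      have h1 : |a θ'| ≤ L₂ := le_trans (le_max_left _ _) (hL₂ θ')
      have h2 : b θ' ≤ L₂ := le_trans (le_max_right _ _) (hL₂ θ')
      have h3 : |z θ' u| ≤ |a θ'| + b θ' * |u| := by
        rw [hz]
        refine le_trans (abs_add_le _ _) ?_
        rw [abs_mul, abs_of_nonneg (hb0 θ')]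
      nlinarith only [h1, h2, h3, hb0 θ', abs_nonneg u, huM, hL₂pos.le, hM0]
    have htailnn : 0 ≤ ∑ i : Fin n, ((θ' : Fin (n+1) → ℝ) i.castSucc) ^ 2 :=
      Finset.sum_nonneg fun i _ => sq_nonneg _
    have htail : ∑ i : Fin n, ((θ' : Fin (n+1) → ℝ) i.castSucc) ^ 2 ≤ 1 := by
      have h := sum_sq_eq_one θ'
      rw [Fin.sum_univ_castSucc] at h
      linarith only [h, sq_nonneg ((θ' : Fin (n+1) → ℝ) (Fin.last n))]
    have hwv_eq : w θ' u =
        Real.sqrt ((z θ' u) ^ 2 + ∑ i : Fin n, ((θ' : Fin (n+1) → ℝ) i.castSucc) ^ 2) := by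
      rw [hw]
      unfold euclNorm
      rw [Fin.sum_univ_succ]
      simp [Fin.cons_zero, Fin.cons_succ]
    have hz_le_w : |z θ' u| ≤ w θ' u := by
      rw [hwv_eq, ← Real.sqrt_sq_eq_abs]
      exact Real.sqrt_le_sqrt (by linarith only [htailnn])
    have hw_pos : 0 < w θ' u := lt_of_lt_of_le (lt_of_lt_of_le hη0 hzη) hz_le_w
    have hw_le_K : w θ' u ≤ K := by
      rw [hwv_eq, hK]
      apply Real.sqrt_le_sqrt
      have hsq : (z θ' u) ^ 2 ≤ (L₂ * (1 + M)) ^ 2 := by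
        nlinarith only [hzabs, abs_nonneg (z θ' u), sq_abs (z θ' u)]
      linarith only [hsq, htail]
    have hFeq := hF θ' u (ne_of_gt hw_pos)
    intro j
    refine Fin.cases ?_ ?_ j
    · intro _
      rw [hFeq]
      simp only [Pi.smul_apply, Fin.cons_zero, smul_eq_mul, Fin.val_zero, Nat.sub_zero]
      rw [abs_mul, abs_inv, abs_of_pos hw_pos, inv_mul_eq_div, le_div_iff₀ hw_pos]
      have h1 : δ * K ^ n * w θ' u ≤ δ * K ^ n * K :=
        mul_le_mul_of_nonneg_left hw_le_K (by positivity)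
      have h2 : δ * K ^ n * K = η := by rw [← hηδ, pow_succ]; ring
      linarith only [h1, h2, hzη]
    · intro i hj
      rw [hFeq]
      simp only [Pi.smul_apply, Fin.cons_succ, smul_eq_mul, Fin.val_succ]
      have hi : (i : ℕ) < k := by
        simp only [Fin.val_succ] at hj; omega
      have hprev := hk i.castSucc (by simpa [Fin.coe_castSucc] using hi)
      rw [Fin.coe_castSucc] at hprev
      have hpow : K ^ (n - (i : ℕ)) = K ^ (n - ((i : ℕ) + 1)) * K := by
        rw [← pow_succ]
        congr 1
        omega
      rw [hpow] at hprev
      rw [abs_mul, abs_inv, abs_of_pos hw_pos, inv_mul_eq_div, le_div_iff₀ hw_pos]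
      have h1 : δ * K ^ (n - ((i : ℕ) + 1)) * w θ' u ≤ δ * K ^ (n - ((i : ℕ) + 1)) * K :=
        mul_le_mul_of_nonneg_left hw_le_K (by positivity)
      linarith only [h1, hprev]
  ------------------------------------------------------------------
  -- analytic bound on the bad slices
  ------------------------------------------------------------------
  have hslice : ∀ θ'' : Sph n, ν (Prod.mk θ'' ⁻¹' Sbad) ≤ ENNReal.ofReal ε' := by
    intro θ''
    have hpre : Prod.mk θ'' ⁻¹' Sbad =
        {u : ℝ | M < |u|} ∪ {u : ℝ | |u| ≤ M ∧ |a θ'' + b θ'' * u| < η} := by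
      ext u; simp [hSbad, Set.mem_union]
    have hb2 : ν {u : ℝ | |u| ≤ M ∧ |a θ'' + b θ'' * u| < η} ≤ ENNReal.ofReal (ε' / 2) := by
      rcases lt_or_ge (b θ'') c with hb | hb
      · have hempty : {u : ℝ | |u| ≤ M ∧ |a θ'' + b θ'' * u| < η} = ∅ := by
          rw [Set.eq_empty_iff_forall_notMem]
          rintro u ⟨h1, h2⟩
          have ha : L₁ ≤ |a θ''| := by
            rcases le_max_iff.mp (hL₁ θ'') with h | h
            · exact h
            · linarith only [h, hb, hcL₁]
          have habs : |b θ'' * u| ≤ c * M := by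
            rw [abs_mul, abs_of_nonneg (hb0 θ'')]
            exact mul_le_mul hb.le h1 (abs_nonneg u) hc0.le
          have htri : |a θ''| ≤ |a θ'' + b θ'' * u| + |b θ'' * u| := by
            have h := abs_add_le (a θ'' + b θ'' * u) (-(b θ'' * u))
            simpa using h
          linarith only [ha, habs, htri, h2, hηL₁, hcM]
        rw [hempty]
        simp
      · have hbpos : 0 < b θ'' := lt_of_lt_of_le hc0 hb
        have hsubI : {u : ℝ | |u| ≤ M ∧ |a θ'' + b θ'' * u| < η} ⊆
            Set.Ioo ((-η - a θ'') / b θ'') ((η - a θ'') / b θ'') := by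
          rintro u ⟨_, h2⟩
          rw [abs_lt] at h2
          constructor
          · rw [div_lt_iff₀ hbpos]; linarith only [h2.1]
          · rw [lt_div_iff₀ hbpos]; linarith only [h2.2]
        have hlen : (η - a θ'') / b θ'' - (-η - a θ'') / b θ'' = 2 * η / b θ'' := by
          field_simp
          ring
        calc ν {u : ℝ | |u| ≤ M ∧ |a θ'' + b θ'' * u| < η}
            ≤ ν (Set.Ioo ((-η - a θ'') / b θ'') ((η - a θ'') / b θ'')) := measure_mono hsubI
          _ = ∫⁻ u in Set.Ioo ((-η - a θ'') / b θ'') ((η - a θ'') / b θ''),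
                ENNReal.ofReal (f u) := withDensity_apply _ measurableSet_Ioo
          _ ≤ ∫⁻ _ in Set.Ioo ((-η - a θ'') / b θ'') ((η - a θ'') / b θ''),
                ENNReal.ofReal L₀ := lintegral_mono fun u => ENNReal.ofReal_le_ofReal (hfL₀ u)
          _ = ENNReal.ofReal L₀ *
                volume (Set.Ioo ((-η - a θ'') / b θ'') ((η - a θ'') / b θ'')) :=
              setLIntegral_const _ _
          _ = ENNReal.ofReal L₀ * ENNReal.ofReal (2 * η / b θ'') := by
              rw [Real.volume_Ioo, hlen]
          _ = ENNReal.ofReal (L₀ * (2 * η / b θ'')) := (ENNReal.ofReal_mul hL₀0).symm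
          _ ≤ ENNReal.ofReal (ε' / 2) := by
              apply ENNReal.ofReal_le_ofReal
              have hdiv : 2 * η / b θ'' ≤ 2 * η / c :=
                div_le_div_of_nonneg_left (by positivity) hc0 hb
              have hfin : L₀ * (2 * η / c) ≤ ε' / 2 := by
                have heq : L₀ * (2 * η / c) = (L₀ * (2 * η)) / c := by ring
                rw [heq, div_le_iff₀ hc0]
                linarith only [hη2, hη0.le]
              linarith only [mul_le_mul_of_nonneg_left hdiv hL₀0, hfin]
    calc ν (Prod.mk θ'' ⁻¹' Sbad)
        ≤ ν {u : ℝ | M < |u|} + ν {u : ℝ | |u| ≤ M ∧ |a θ'' + b θ'' * u| < η} := by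
          rw [hpre]; exact measure_union_le _ _
      _ ≤ ENNReal.ofReal (ε' / 2) + ENNReal.ofReal (ε' / 2) := add_le_add hm.le hb2
      _ = ENNReal.ofReal ε' := by rw [← ENNReal.ofReal_add (by positivity) (by positivity)]; ring_nf
  ------------------------------------------------------------------
  -- probabilistic per-step bound
  ------------------------------------------------------------------
  have hstepProb : ∀ (θ' : Sph n) (t : ℕ),
      μ {ω | (chainF F e θ' t ω, e t ω) ∈ Sbad} ≤ ENNReal.ofReal ε' := by
    intro θ' t
    set Θt : Ω → Sph n := fun ω => chainG F θ' t (fun i : Fin t => e i ω) with hΘt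
    have hΘm : Measurable Θt :=
      (measurable_chainG hFm θ' t).comp (measurable_pi_lambda _ fun i => he i)
    have hind : IndepFun Θt (e t) μ :=
      (indep_tuple he hindep t).comp (measurable_chainG hFm θ' t) measurable_id
    haveI : IsProbabilityMeasure (μ.map Θt) := Measure.isProbabilityMeasure_map hΘm.aemeasurable
    calc μ {ω | (chainF F e θ' t ω, e t ω) ∈ Sbad}
        = μ ((fun ω => (Θt ω, e t ω)) ⁻¹' Sbad) := by
          congr 1
          ext ω
          simp only [Set.mem_setOf_eq, Set.mem_preimage, hΘt, chainF_eq_chainG]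
      _ = (μ.map (fun ω => (Θt ω, e t ω))) Sbad :=
          (Measure.map_apply (hΘm.prodMk (he t)) hSbadMeas).symm
      _ = ((μ.map Θt).prod ν) Sbad := by
          rw [(indepFun_iff_map_prod_eq_prod_map_map hΘm.aemeasurable
            (he t).aemeasurable).mp hind, hlaw t]
      _ = ∫⁻ x, ν (Prod.mk x ⁻¹' Sbad) ∂(μ.map Θt) := Measure.prod_apply hSbadMeas
      _ ≤ ∫⁻ _, ENNReal.ofReal ε' ∂(μ.map Θt) := lintegral_mono fun x => hslice x
      _ = ENNReal.ofReal ε' := by simp [lintegral_const]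
  ------------------------------------------------------------------
  -- extract the good-event information
  ------------------------------------------------------------------
  have hgood : ∀ (θ' : Sph n) (u : ℝ), (θ', u) ∉ Sbad → |u| ≤ M ∧ η ≤ |z θ' u| := by
    intro θ' u h
    simp only [hSbad, Set.mem_setOf_eq, not_or, not_and, not_lt] at h
    exact ⟨h.1, by rw [hz]; exact h.2 h.1⟩
  ------------------------------------------------------------------
  -- conclusion
  ------------------------------------------------------------------
  refine ⟨C₁, ?_, ?_, ?_, ?_⟩
  · -- compactness
    apply IsClosed.isCompact
    have : C₁ = ⋂ j : Fin (n+1),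
        {θ' : Sph n | δ * K ^ (n - (j : ℕ)) ≤ |(θ' : Fin (n+1) → ℝ) j|} := by
      ext θ'; simp [hC₁, Set.mem_iInter]
    rw [this]
    refine isClosed_iInter fun j => ?_
    exact isClosed_le continuous_const (((continuous_apply j).comp continuous_subtype_val).abs)
  · -- nonvanishing coordinates
    intro θ' hθ' i
    have := hθ' i
    have hpos : 0 < δ * K ^ (n - (i : ℕ)) := by positivity
    intro h0
    rw [h0] at this
    simp only [abs_zero] at this
    linarith only [this, hpos]
  · -- (i) one step from C₁
    intro θ' hθ'
    have hsub1 : {ω | (chainF F e θ' 0 ω, e 0 ω) ∉ Sbad} ⊆ {ω | chainF F e θ' 1 ω ∈ C₁} := by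
      intro ω hω
      obtain ⟨h1, h2⟩ := hgood θ' (e 0 ω) hω
      have h := hstep θ' (e 0 ω) h1 h2 (n + 1) (fun j _ => hθ' j)
      intro j
      exact h j (by omega)
    have hcompl : {ω | (chainF F e θ' 0 ω, e 0 ω) ∉ Sbad} =
        {ω | (chainF F e θ' 0 ω, e 0 ω) ∈ Sbad}ᶜ := rfl
    have h1le : (1 : ENNReal) ≤ μ {ω | (chainF F e θ' 0 ω, e 0 ω) ∉ Sbad} + ENNReal.ofReal ε' := by
      calc (1 : ENNReal) = μ Set.univ := (measure_univ).symm
        _ ≤ μ ({ω | (chainF F e θ' 0 ω, e 0 ω) ∉ Sbad} ∪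
              {ω | (chainF F e θ' 0 ω, e 0 ω) ∈ Sbad}) := by
            apply measure_mono
            intro ω _
            by_cases h : (chainF F e θ' 0 ω, e 0 ω) ∈ Sbad
            · exact Or.inr h
            · exact Or.inl h
        _ ≤ μ {ω | (chainF F e θ' 0 ω, e 0 ω) ∉ Sbad} +
              μ {ω | (chainF F e θ' 0 ω, e 0 ω) ∈ Sbad} := measure_union_le _ _
        _ ≤ _ := add_le_add_right (hstepProb θ' 0) _
    calc ENNReal.ofReal (1 - ε₁) < ENNReal.ofReal (1 - ε') := by
          rw [ENNReal.ofReal_lt_ofReal_iff (by linarith only [hε'lt, hε₁1])]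
          linarith only [hε'lt]
      _ = 1 - ENNReal.ofReal ε' := by
          rw [ENNReal.ofReal_sub _ hε'0.le, ENNReal.ofReal_one]
      _ ≤ μ {ω | (chainF F e θ' 0 ω, e 0 ω) ∉ Sbad} := tsub_le_iff_right.mpr h1le
      _ ≤ μ {ω | chainF F e θ' 1 ω ∈ C₁} := measure_mono hsub1
  · -- (ii) n+1 steps from anywhere
    intro θ'
    set Bd : ℕ → Set Ω := fun t => {ω | (chainF F e θ' t ω, e t ω) ∈ Sbad} with hBd
    have hsub : (⋂ t : Fin (n+1), (Bd t)ᶜ) ⊆ {ω | chainF F e θ' (n+1) ω ∈ C₁} := by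
      intro ω hω
      have hchain : ∀ t : ℕ, t ≤ n + 1 → ∀ j : Fin (n + 1), (j : ℕ) < t →
          δ * K ^ (n - (j : ℕ)) ≤ |((chainF F e θ' t ω : Sph n) : Fin (n+1) → ℝ) j| := by
        intro t
        induction t with
        | zero => intro _ j hj; omega
        | succ t ih =>
          intro ht j hj
          have hωt : ω ∈ (Bd t)ᶜ := Set.mem_iInter.mp hω ⟨t, by omega⟩
          have hnot : (chainF F e θ' t ω, e t ω) ∉ Sbad := hωt
          obtain ⟨h1, h2⟩ := hgood _ (e t ω) hnot
          exact hstep (chainF F e θ' t ω) (e t ω) h1 h2 t (ih (by omega)) j hj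
      intro j
      exact hchain (n+1) le_rfl j j.isLt
    have hbound : μ (⋃ t : Fin (n+1), Bd t) ≤ ENNReal.ofReal (ε₁ / 2) := by
      calc μ (⋃ t : Fin (n+1), Bd t) ≤ ∑' t : Fin (n+1), μ (Bd t) := measure_iUnion_le _
        _ = ∑ t : Fin (n+1), μ (Bd t) := tsum_fintype _
        _ ≤ ∑ _t : Fin (n+1), ENNReal.ofReal ε' :=
            Finset.sum_le_sum fun t _ => hstepProb θ' t
        _ = (n + 1 : ℕ) • ENNReal.ofReal ε' := by
            rw [Finset.sum_const, Finset.card_univ, Fintype.card_fin]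
        _ = ENNReal.ofReal (((n : ℝ) + 1) * ε') := by
            rw [nsmul_eq_mul, ← ENNReal.ofReal_natCast (n+1),
              ← ENNReal.ofReal_mul (by positivity)]
            norm_num
        _ = ENNReal.ofReal (ε₁ / 2) := by
            congr 1
            rw [hε']
            field_simp
    have hcompl : (⋂ t : Fin (n+1), (Bd t)ᶜ)ᶜ = ⋃ t : Fin (n+1), Bd t := by
      simp [Set.compl_iInter]
    have h1le : (1 : ENNReal) ≤ μ (⋂ t : Fin (n+1), (Bd t)ᶜ) + ENNReal.ofReal (ε₁ / 2) := by
      calc (1 : ENNReal) = μ Set.univ := (measure_univ).symm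
        _ ≤ μ ((⋂ t : Fin (n+1), (Bd t)ᶜ) ∪ (⋂ t : Fin (n+1), (Bd t)ᶜ)ᶜ) := by
            rw [Set.union_compl_self]
        _ ≤ μ (⋂ t : Fin (n+1), (Bd t)ᶜ) + μ ((⋂ t : Fin (n+1), (Bd t)ᶜ)ᶜ) :=
            measure_union_le _ _
        _ ≤ _ := by
            rw [hcompl]
            exact add_le_add_right hbound _
    calc ENNReal.ofReal (1 - ((n : ℝ) + 1) * ε₁) < ENNReal.ofReal (1 - ε₁ / 2) := by
          rw [ENNReal.ofReal_lt_ofReal_iff (by linarith only [hε₁1, hε₁0])]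
          nlinarith only [Nat.cast_nonneg (α := ℝ) n, hε₁0]
      _ = 1 - ENNReal.ofReal (ε₁ / 2) := by
          rw [ENNReal.ofReal_sub _ (by positivity), ENNReal.ofReal_one]
      _ ≤ μ (⋂ t : Fin (n+1), (Bd t)ᶜ) := tsub_le_iff_right.mpr h1le
      _ ≤ μ {ω | chainF F e θ' (n+1) ω ∈ C₁} := measure_mono hsub
end

section
/- Assume E(|e₁|^{r₀}) < ∞ for some r₀ > 0. Then: (a) for every s ∈ (−1, r₀], sup_{θ∈Θ} E(|z(θ, e₁)|^s) < ∞; and (b) sup_{θ∈Θ} E(|log w(θ, e₁)|) < ∞. -/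
open MeasureTheory Finset

/-!
Both parts reduce to bounds for `E|A + B e₁|^s`, uniform over coefficients with
`L₁ ≤ max(|A|, |B|) ≤ L₂`. For `s ≥ 0` this is the moment bound `|A + B u| ≤ 2 L₂ max(1, |u|)`.
For `-1 < s < 0` the only danger is the zero `u = -A/B`: on the set `|A + B u| < L₁/2` the decay
`(1 + |u|) f(u) ≤ L₀` forces `f(u) ≲ |B|`, which cancels the Jacobian `|B|⁻¹` of the
substitution `v = A + B u`, and `|v|^s` is integrable near `0`.
For (b), `|z| ≤ w ≤ 1 + |z|` on the sphere and `|log w| ≤ w^r / r + 2 w^{-1/2}` reduce the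
logarithmic moment to the moments of orders `min(r₀, 1)` and `-1/2` from (a).
-/

open scoped ENNReal

lemma lintegral_comp_const_add_mul (g : ℝ → ℝ≥0∞) (hg : Measurable g) (c : ℝ) {B : ℝ}
    (hB : B ≠ 0) : ∫⁻ u, g (c + B * u) = ENNReal.ofReal |B⁻¹| * ∫⁻ v, g v := by
  rw [← lintegral_map (f := fun x => g (c + x)) (hg.comp (measurable_const_add c))
    (measurable_const_mul B), Real.map_volume_mul_left hB, lintegral_smul_measure,
    lintegral_add_left_eq_self (fun x => g x) c, smul_eq_mul]

lemma lintegral_ball_rpow_abs_lt_top {s : ℝ} (hs : -1 < s) (ε : ℝ) :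
    ∫⁻ v in Metric.ball (0 : ℝ) ε, ENNReal.ofReal |v| ^ s < ∞ := by
  have hint : IntegrableOn (fun v : ℝ => |v| ^ s) (Metric.ball 0 ε) :=
    integrableOn_ball_of_norm_le_rpow (C := 1) (α := -s) (by simp) (by simp; linarith)
      (ae_of_all _ fun v => by simp [Real.abs_rpow_of_nonneg (abs_nonneg v)])
      ((measurable_id.abs.pow_const s).aestronglyMeasurable)
  refine lt_of_eq_of_lt (lintegral_congr_ae ?_) hint.2
  filter_upwards [ae_restrict_of_ae (Measure.ae_ne volume 0)] with v hv
  rw [ENNReal.ofReal_rpow_of_pos (abs_pos.2 hv), Real.enorm_eq_ofReal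
    (Real.rpow_nonneg (abs_nonneg v) s)]

section NegativeMoments

variable {f : ℝ → ℝ} {L₀ L₁ : ℝ}

lemma mul_density_le_of_abs_affine_lt (hf0 : ∀ u, 0 ≤ f u)
    (hL₀ : ∀ u, (1 + |u|) * f u ≤ L₀) {A B u : ℝ} (hAB : L₁ ≤ max |A| |B|)
    (hu : |A + B * u| < L₁ / 2) : L₁ * f u ≤ 2 * L₀ * |B| := by
  have hL₁ : L₁ ≤ 2 * |B| * (1 + |u|) := by
    rcases le_max_iff.1 hAB with hA | hB
    · have : |A| - |A + B * u| ≤ |B| * |u| := by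
        rw [← abs_mul]
        simpa using abs_sub_abs_le_abs_sub A (A + B * u)
      nlinarith [abs_nonneg B]
    · nlinarith [abs_nonneg B, abs_nonneg u]
  nlinarith [hL₀ u, hf0 u, abs_nonneg B]

lemma rpow_abs_affine_mul_density_le (hf0 : ∀ u, 0 ≤ f u) (hL₀ : ∀ u, (1 + |u|) * f u ≤ L₀)
    (hL₁ : 0 < L₁) {s : ℝ} (hs : s ≤ 0) {A B : ℝ} (hAB : L₁ ≤ max |A| |B|) (u : ℝ) :
    ENNReal.ofReal |A + B * u| ^ s * ENNReal.ofReal (f u) ≤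
      ENNReal.ofReal (L₁ / 2) ^ s * ENNReal.ofReal (f u) +
        ENNReal.ofReal (2 * L₀ / L₁ * |B|) *
          (Metric.ball 0 (L₁ / 2)).indicator (fun v => ENNReal.ofReal |v| ^ s) (A + B * u) := by
  by_cases hu : |A + B * u| < L₁ / 2
  · rw [Set.indicator_of_mem (mem_ball_zero_iff.2 hu), mul_comm (ENNReal.ofReal _)]
    have hfu : f u ≤ 2 * L₀ / L₁ * |B| := by
      rw [div_mul_eq_mul_div, le_div_iff₀ hL₁]
      linarith [mul_density_le_of_abs_affine_lt hf0 hL₀ hAB hu]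
    exact le_add_left (by gcongr)
  · push Not at hu
    have hpos : 0 < L₁ / 2 := by positivity
    rw [ENNReal.ofReal_rpow_of_pos (hpos.trans_le hu), ENNReal.ofReal_rpow_of_pos hpos]
    exact le_add_right (mul_le_mul_left
      (ENNReal.ofReal_le_ofReal (Real.rpow_le_rpow_of_nonpos hpos hu hs)) _)

lemma lintegral_rpow_abs_affine_withDensity_le (hf0 : ∀ u, 0 ≤ f u) (hfm : Measurable f)
    (hL₀ : ∀ u, (1 + |u|) * f u ≤ L₀) (hL₁ : 0 < L₁) {s : ℝ} (hs : s ≤ 0) {A B : ℝ}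
    (hAB : L₁ ≤ max |A| |B|) :
    ∫⁻ u, ENNReal.ofReal |A + B * u| ^ s ∂volume.withDensity (fun u => ENNReal.ofReal (f u)) ≤
      ENNReal.ofReal (L₁ / 2) ^ s * volume.withDensity (fun u => ENNReal.ofReal (f u)) Set.univ +
        ENNReal.ofReal (2 * L₀ / L₁) *
          ∫⁻ v in Metric.ball 0 (L₁ / 2), ENNReal.ofReal |v| ^ s := by
  set g := (Metric.ball (0 : ℝ) (L₁ / 2)).indicator (fun v => ENNReal.ofReal |v| ^ s)
  have hg : Measurable g := Measurable.indicator (by fun_prop) measurableSet_ball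
  rw [lintegral_withDensity_eq_lintegral_mul _ hfm.ennreal_ofReal (by fun_prop),
    withDensity_apply _ .univ, Measure.restrict_univ]
  calc _ ≤ ∫⁻ u, (ENNReal.ofReal (L₁ / 2) ^ s * ENNReal.ofReal (f u) +
          ENNReal.ofReal (2 * L₀ / L₁ * |B|) * g (A + B * u)) :=
        lintegral_mono fun u => by
          simpa only [Pi.mul_apply, mul_comm (ENNReal.ofReal (f u))] using
            rpow_abs_affine_mul_density_le hf0 hL₀ hL₁ hs hAB u
    _ = ENNReal.ofReal (L₁ / 2) ^ s * (∫⁻ u, ENNReal.ofReal (f u)) +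
          ENNReal.ofReal (2 * L₀ / L₁ * |B|) * ∫⁻ u, g (A + B * u) := by
        rw [lintegral_add_left (by fun_prop), lintegral_const_mul _ hfm.ennreal_ofReal,
          lintegral_const_mul _ (by fun_prop)]
    _ ≤ _ := by
        refine add_le_add le_rfl ?_
        rcases eq_or_ne B 0 with rfl | hB
        · simp
        have hL₀0 : 0 ≤ L₀ := (hf0 0).trans (by simpa using hL₀ 0)
        rw [lintegral_comp_const_add_mul g hg A hB, ← mul_assoc, ← ENNReal.ofReal_mul
          (by positivity), mul_assoc, ← abs_mul, mul_inv_cancel₀ hB, abs_one, mul_one,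
          lintegral_indicator measurableSet_ball]

end NegativeMoments

lemma ENNReal.max_one_rpow_le_one_add_rpow (x : ℝ≥0∞) {s r : ℝ} (hsr : s ≤ r) :
    max 1 x ^ s ≤ 1 + x ^ r := by
  rcases le_total x 1 with hx | hx
  · simp [max_eq_left hx]
  · rw [max_eq_right hx]
    exact (ENNReal.rpow_le_rpow_of_exponent_le hx hsr).trans le_add_self

lemma lintegral_rpow_abs_affine_le_of_abs_le {ν : Measure ℝ} {r s M : ℝ} (hs : 0 ≤ s)
    (hsr : s ≤ r) {A B : ℝ} (hA : |A| ≤ M) (hB : |B| ≤ M) :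
    ∫⁻ u, ENNReal.ofReal |A + B * u| ^ s ∂ν ≤
      ENNReal.ofReal (2 * M) ^ s * (ν Set.univ + ∫⁻ u, ENNReal.ofReal |u| ^ r ∂ν) := by
  have hpt (u : ℝ) :
      ENNReal.ofReal |A + B * u| ≤ ENNReal.ofReal (2 * M) * max 1 (ENNReal.ofReal |u|) := by
    have hM : 0 ≤ M := (abs_nonneg A).trans hA
    rw [← ENNReal.ofReal_one, ← ENNReal.ofReal_max, ← ENNReal.ofReal_mul (by positivity)]
    refine ENNReal.ofReal_le_ofReal ?_
    calc |A + B * u| ≤ |A| + |B| * |u| := by rw [← abs_mul]; exact abs_add_le _ _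
      _ ≤ M * max 1 |u| + M * max 1 |u| := by
          gcongr
          · exact hA.trans (le_mul_of_one_le_right hM (le_max_left _ _))
          · exact le_max_right _ _
      _ = 2 * M * max 1 |u| := by ring
  calc _ ≤ ∫⁻ u, ENNReal.ofReal (2 * M) ^ s * (1 + ENNReal.ofReal |u| ^ r) ∂ν :=
        lintegral_mono fun u => by
          grw [hpt u, ENNReal.mul_rpow_of_nonneg _ _ hs,
            ENNReal.max_one_rpow_le_one_add_rpow _ hsr]
    _ = _ := by
        rw [lintegral_const_mul _ (by fun_prop), lintegral_add_left measurable_const,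
          lintegral_one]

theorem exists_lintegral_rpow_abs_affine_le {f : ℝ → ℝ} (hf0 : ∀ u, 0 ≤ f u)
    (hfm : Measurable f) [IsFiniteMeasure (volume.withDensity fun u => ENNReal.ofReal (f u))]
    {L₀ : ℝ} (hL₀ : ∀ u, (1 + |u|) * f u ≤ L₀) {r : ℝ}
    (hmom : ∫⁻ u, ENNReal.ofReal |u| ^ r ∂volume.withDensity (fun u => ENNReal.ofReal (f u)) < ∞)
    {L₁ : ℝ} (hL₁ : 0 < L₁) (L₂ : ℝ) {s : ℝ} (hs : -1 < s) (hsr : s ≤ r) :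
    ∃ C ≠ ∞, ∀ A B : ℝ, max |A| |B| ≤ L₂ → L₁ ≤ max |A| |B| →
      ∫⁻ u, ENNReal.ofReal |A + B * u| ^ s ∂volume.withDensity (fun u => ENNReal.ofReal (f u))
        ≤ C := by
  rcases le_or_gt 0 s with hs0 | hs0
  · refine ⟨_, ?_, fun A B hAB _ => lintegral_rpow_abs_affine_le_of_abs_le hs0 hsr
      ((le_max_left _ _).trans hAB) ((le_max_right _ _).trans hAB)⟩
    exact ENNReal.mul_ne_top (ENNReal.rpow_ne_top_of_nonneg hs0 ENNReal.ofReal_ne_top)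
      (ENNReal.add_ne_top.2 ⟨measure_ne_top _ _, hmom.ne⟩)
  · refine ⟨_, ?_, fun A B _ hAB =>
      lintegral_rpow_abs_affine_withDensity_le hf0 hfm hL₀ hL₁ hs0.le hAB⟩
    exact ENNReal.add_ne_top.2 ⟨ENNReal.mul_ne_top
      (ENNReal.rpow_ne_top_of_ne_zero (by simpa using hL₁) ENNReal.ofReal_ne_top)
      (measure_ne_top _ _), ENNReal.mul_ne_top ENNReal.ofReal_ne_top
      (lintegral_ball_rpow_abs_lt_top hs _).ne⟩

lemma Real.abs_log_le_rpow_div_add {w r : ℝ} (hw : 0 < w) (hr : 0 < r) :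
    |Real.log w| ≤ w ^ r / r + 2 * w ^ (-(1 / 2) : ℝ) := by
  have hlog : Real.log w ≤ w ^ r / r := Real.log_le_rpow_div hw.le hr
  have hneglog : -Real.log w ≤ 2 * w ^ (-(1 / 2) : ℝ) := by
    have := Real.log_le_rpow_div (inv_nonneg.2 hw.le) (one_half_pos : (0 : ℝ) < 1 / 2)
    rw [Real.log_inv, Real.inv_rpow hw.le, ← Real.rpow_neg hw.le] at this
    linarith
  have h1 : 0 ≤ w ^ r / r := by positivity
  have h2 : 0 ≤ w ^ (-(1 / 2) : ℝ) := by positivity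
  exact abs_le.2 ⟨by linarith, by linarith⟩

lemma ENNReal.ofReal_abs_log_le {x w r : ℝ} (hx : 0 ≤ x) (hxw : x ≤ w) (hw : w ≤ 1 + x)
    (hr : 0 < r) (hr1 : r ≤ 1) :
    ENNReal.ofReal |Real.log w| ≤
      ENNReal.ofReal r⁻¹ * (1 + ENNReal.ofReal x ^ r) + 2 * ENNReal.ofReal x ^ (-(1 / 2) : ℝ) := by
  rcases hx.eq_or_lt with rfl | hx
  · simp [ENNReal.zero_rpow_of_neg]
  have hw0 : 0 < w := hx.trans_le hxw
  have hwr : w ^ r ≤ 1 + x ^ r := (Real.rpow_le_rpow hw0.le hw hr.le).trans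
    (by simpa using Real.rpow_add_le_add_rpow zero_le_one hx.le hr.le hr1)
  have hw_half : w ^ (-(1 / 2) : ℝ) ≤ x ^ (-(1 / 2) : ℝ) :=
    Real.rpow_le_rpow_of_nonpos hx hxw (by norm_num)
  calc ENNReal.ofReal |Real.log w|
      ≤ ENNReal.ofReal (r⁻¹ * (1 + x ^ r) + 2 * x ^ (-(1 / 2) : ℝ)) := by
        refine ENNReal.ofReal_le_ofReal ((Real.abs_log_le_rpow_div_add hw0 hr).trans ?_)
        rw [div_eq_inv_mul]
        gcongr
    _ = _ := by
        rw [ENNReal.ofReal_add (by positivity) (by positivity), ENNReal.ofReal_mul (by positivity),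
          ENNReal.ofReal_mul (by norm_num), ENNReal.ofReal_add zero_le_one (by positivity),
          ENNReal.ofReal_one, ENNReal.ofReal_rpow_of_pos hx, ENNReal.ofReal_rpow_of_pos hx,
          ENNReal.ofReal_ofNat]

lemma lintegral_ofReal_abs_log_le {Ω : Type*} [MeasurableSpace Ω] {μ : Measure Ω}
    {Z W : Ω → ℝ} (hZ : Measurable Z) (hZW : ∀ ω, |Z ω| ≤ W ω) (hWZ : ∀ ω, W ω ≤ 1 + |Z ω|)
    {r : ℝ} (hr : 0 < r) (hr1 : r ≤ 1) :
    ∫⁻ ω, ENNReal.ofReal |Real.log (W ω)| ∂μ ≤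
      ENNReal.ofReal r⁻¹ * (μ Set.univ + ∫⁻ ω, ENNReal.ofReal |Z ω| ^ r ∂μ) +
        2 * ∫⁻ ω, ENNReal.ofReal |Z ω| ^ (-(1 / 2) : ℝ) ∂μ :=
  calc ∫⁻ ω, ENNReal.ofReal |Real.log (W ω)| ∂μ
      ≤ ∫⁻ ω, (ENNReal.ofReal r⁻¹ * (1 + ENNReal.ofReal |Z ω| ^ r) +
          2 * ENNReal.ofReal |Z ω| ^ (-(1 / 2) : ℝ)) ∂μ :=
        lintegral_mono fun ω => ENNReal.ofReal_abs_log_le (abs_nonneg _) (hZW ω) (hWZ ω) hr hr1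
    _ = _ := by
        rw [lintegral_add_left (by fun_prop), lintegral_const_mul _ (by fun_prop),
          lintegral_const_mul _ (by fun_prop), lintegral_add_left measurable_const,
          lintegral_one]

lemma euclNorm_cons {n : ℕ} (t : ℝ) (v : Fin n → ℝ) :
    euclNorm (Fin.cons t v : Fin (n + 1) → ℝ) = √(t ^ 2 + ∑ i, v i ^ 2) := by
  simp [euclNorm, Fin.sum_univ_succ]

lemma abs_le_euclNorm_cons {n : ℕ} (t : ℝ) (v : Fin n → ℝ) :
    |t| ≤ euclNorm (Fin.cons t v : Fin (n + 1) → ℝ) := by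
  rw [euclNorm_cons, ← Real.sqrt_sq_eq_abs]
  exact Real.sqrt_le_sqrt (le_add_of_nonneg_right (sum_nonneg fun i _ => sq_nonneg (v i)))

lemma euclNorm_cons_le_one_add_abs {n : ℕ} (t : ℝ) {v : Fin n → ℝ} (hv : ∑ i, v i ^ 2 ≤ 1) :
    euclNorm (Fin.cons t v : Fin (n + 1) → ℝ) ≤ 1 + |t| := by
  rw [euclNorm_cons, Real.sqrt_le_left (by positivity)]
  nlinarith [sq_abs t, abs_nonneg t]

lemma Sph.sum_sq_castSucc_le_one {n : ℕ} (θ : Sph n) :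
    ∑ i : Fin n, (θ : Fin (n + 1) → ℝ) i.castSucc ^ 2 ≤ 1 := by
  have h := θ.2
  rw [euclNorm, Real.sqrt_eq_one, Fin.sum_univ_castSucc] at h
  nlinarith [sq_nonneg ((θ : Fin (n + 1) → ℝ) (Fin.last n))]

theorem stmt12_general {Ω : Type*} [MeasurableSpace Ω] (μ : Measure Ω) [IsProbabilityMeasure μ]
    (n : ℕ) (e : Ω → ℝ) (he : Measurable e)
    (f : ℝ → ℝ) (hf0 : ∀ u, 0 ≤ f u) (hfm : Measurable f)
    (hlaw : μ.map e = volume.withDensity (fun u => ENNReal.ofReal (f u)))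
    (L₀ : ℝ) (hL₀ : ∀ u, (1 + |u|) * f u ≤ L₀)
    (r₀ : ℝ) (hr₀ : 0 < r₀) (hmom : Integrable (fun ω => |e ω| ^ r₀) μ)
    (a b : Sph n → ℝ) (hb0 : ∀ θ, 0 ≤ b θ)
    (L₂ : ℝ) (hL₂ : ∀ θ, max |a θ| (b θ) ≤ L₂)
    (L₁ : ℝ) (hL₁0 : 0 < L₁) (hL₁ : ∀ θ, L₁ ≤ max |a θ| (b θ))
    (z : Sph n → ℝ → ℝ) (hz : ∀ θ u, z θ u = a θ + b θ * u)
    (w : Sph n → ℝ → ℝ)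
    (hw : ∀ θ u, w θ u =
      euclNorm (Fin.cons (z θ u) (fun i : Fin n => (θ : Fin (n + 1) → ℝ) i.castSucc))) :
    (∀ s : ℝ, -1 < s → s ≤ r₀ →
        ∃ C : ENNReal, C ≠ ⊤ ∧ ∀ θ : Sph n,
          ∫⁻ ω, (ENNReal.ofReal |z θ (e ω)|) ^ s ∂μ ≤ C) ∧
      ∃ C : ℝ, ∀ θ : Sph n,
        ∫⁻ ω, ENNReal.ofReal |Real.log (w θ (e ω))| ∂μ ≤ ENNReal.ofReal C := by
  have : IsFiniteMeasure (volume.withDensity fun u => ENNReal.ofReal (f u)) :=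
    hlaw ▸ inferInstance
  have hmom' : ∫⁻ u, ENNReal.ofReal |u| ^ r₀ ∂(μ.map e) < ∞ := by
    rw [lintegral_map (by fun_prop) he]
    simpa only [ENNReal.ofReal_rpow_of_nonneg (abs_nonneg _) hr₀.le] using hmom.lintegral_lt_top
  have hzm (θ : Sph n) : Measurable (z θ) := by rw [funext (hz θ)]; fun_prop
  have hmoments (s : ℝ) (hs : -1 < s) (hsr : s ≤ r₀) : ∃ C ≠ ∞, ∀ θ : Sph n,
      ∫⁻ ω, ENNReal.ofReal |z θ (e ω)| ^ s ∂μ ≤ C := by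
    obtain ⟨C, hC, hbound⟩ := exists_lintegral_rpow_abs_affine_le hf0 hfm hL₀ (hlaw ▸ hmom')
      hL₁0 L₂ hs hsr
    refine ⟨C, hC, fun θ => ?_⟩
    rw [← lintegral_map (f := fun u => ENNReal.ofReal |z θ u| ^ s) (by fun_prop) he, hlaw,
      funext (hz θ)]
    have hmax : max |a θ| |b θ| = max |a θ| (b θ) := by rw [abs_of_nonneg (hb0 θ)]
    exact hbound _ _ (hmax ▸ hL₂ θ) (hmax ▸ hL₁ θ)
  refine ⟨hmoments, ?_⟩
  set r := min r₀ 1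
  have hr : 0 < r := lt_min hr₀ one_pos
  obtain ⟨C₁, hC₁, h₁⟩ := hmoments r (by linarith) (min_le_left _ _)
  obtain ⟨C₂, hC₂, h₂⟩ := hmoments (-(1 / 2)) (by norm_num) (by linarith)
  refine ⟨(ENNReal.ofReal r⁻¹ * (1 + C₁) + 2 * C₂).toReal, fun θ => ?_⟩
  rw [ENNReal.ofReal_toReal (by finiteness)]
  calc _ ≤ _ := lintegral_ofReal_abs_log_le ((hzm θ).comp he)
        (fun ω => hw θ (e ω) ▸ abs_le_euclNorm_cons _ _)
        (fun ω => hw θ (e ω) ▸ euclNorm_cons_le_one_add_abs _ θ.sum_sq_castSucc_le_one)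
        hr (min_le_right _ _)
    _ ≤ _ := by rw [measure_univ]; gcongr <;> [exact h₁ θ; exact h₂ θ]

/-- On the unit sphere `Θ ⊂ ℝ^p` (`p = n+1`), with
`z(θ,u) = a_*(θ) + b_*(θ)u` and `w(θ,u) = ‖(z(θ,u),θ₁,…,θ_{p−1})‖`, where `a_*, b_*`
are bounded Borel, `b_* ≥ 0`, `inf_θ max(|a_*(θ)|,b_*(θ)) > 0`, and `e₁` has a density
`f` with `sup_u (1+|u|)f(u) < ∞` and `E(|e₁|^{r₀}) < ∞`:
(a) for every `s ∈ (−1, r₀]`, `sup_θ E(|z(θ,e₁)|^s) < ∞` (here `|z|^s = +∞` when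
`z = 0` and `s < 0`, so the expectation is the lower integral in `ℝ≥0∞`); and
(b) `sup_θ E(|log w(θ,e₁)|) < ∞`. -/
theorem stmt12 {Ω : Type*} [MeasurableSpace Ω] (μ : Measure Ω) [IsProbabilityMeasure μ]
    (n : ℕ) (e : Ω → ℝ) (he : Measurable e)
    (f : ℝ → ℝ) (hf0 : ∀ u, 0 ≤ f u) (hfm : Measurable f)
    (hlaw : μ.map e = volume.withDensity (fun u => ENNReal.ofReal (f u)))
    (L₀ : ℝ) (hL₀ : ∀ u, (1 + |u|) * f u ≤ L₀)
    (r₀ : ℝ) (hr₀ : 0 < r₀) (hmom : Integrable (fun ω => |e ω| ^ r₀) μ)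
    (a b : Sph n → ℝ) (ham : Measurable a) (hbm : Measurable b) (hb0 : ∀ θ, 0 ≤ b θ)
    (L₂ : ℝ) (hL₂ : ∀ θ, max |a θ| (b θ) ≤ L₂)
    (L₁ : ℝ) (hL₁0 : 0 < L₁) (hL₁ : ∀ θ, L₁ ≤ max |a θ| (b θ))
    (z : Sph n → ℝ → ℝ) (hz : ∀ θ u, z θ u = a θ + b θ * u)
    (w : Sph n → ℝ → ℝ)
    (hw : ∀ θ u, w θ u =
      euclNorm (Fin.cons (z θ u) (fun i : Fin n => (θ : Fin (n + 1) → ℝ) i.castSucc))) :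
    (∀ s : ℝ, -1 < s → s ≤ r₀ →
        ∃ C : ENNReal, C ≠ ⊤ ∧ ∀ θ : Sph n,
          ∫⁻ ω, (ENNReal.ofReal |z θ (e ω)|) ^ s ∂μ ≤ C) ∧
      ∃ C : ℝ, ∀ θ : Sph n,
        ∫⁻ ω, ENNReal.ofReal |Real.log (w θ (e ω))| ∂μ ≤ ENNReal.ofReal C :=
  stmt12_general μ n e he f hf0 hfm hlaw L₀ hL₀ r₀ hr₀ hmom a b hb0 L₂ hL₂ L₁ hL₁0 hL₁ z hz w hw
end

section
/- Let a₁, a₂ ∈ ℝ and b₁, b₂ > 0, and let e be a real random variable with P(a₁ − b₁e = 0) = 0, P(a₂ + b₂e = 0) = 0, E(|log|a₁ − b₁e||) < ∞ and E(|log|a₂ + b₂e||) < ∞. Set p₁ = P(a₁ − b₁e < 0), p₂ = P(a₂ + b₂e < 0), and assume p₁ + p₂ > 0. Define z(−1, u) = −a₁ + b₁u and z(1, u) = a₂ + b₂u, define log ρ = (p₂ E(log|a₁ − b₁e|) + p₁ E(log|a₂ + b₂e|))/(p₁ + p₂), and define ν(1) = −ν(−1) = (E(log|a₂ + b₂e|)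 − E(log|a₁ − b₁e|))/(2(p₁ + p₂)). Then for each θ ∈ {−1, 1}: E(ν(sgn z(θ, e)) − ν(θ) + log|z(θ, e)|) = log ρ. -/
open MeasureTheory

/-! Writing `sgn z = 2·1{z > 0} − 1`, the expectation of `ν(sgn z(θ, e)) − ν(θ)` is `2ν₁` times the
probability that `z(θ, e)` has the sign opposite to `θ`: this is `p₁` for `θ = −1` and, since
`z(1, e) = 0` is a null event, `p₂` for `θ = 1`. So the two expectations are
`E log|a₁ − b₁e| + 2ν₁p₁` and `E log|a₂ + b₂e| − 2ν₁p₂`, and `ν₁` is exactly the value making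
both equal to the weighted mean `log ρ`. -/

section SignOfRandomVariable

variable {Ω : Type*} [MeasurableSpace Ω] {μ : Measure Ω} [IsProbabilityMeasure μ] {Z : Ω → ℝ}

lemma integral_ite_pos_const_neg (hZ : Measurable Z) (c : ℝ) :
    ∫ ω, (if 0 < Z ω then c else -c) ∂μ = c * (2 * μ.real {ω | 0 < Z ω} - 1) := by
  have hs : MeasurableSet {ω | 0 < Z ω} := measurableSet_lt measurable_const hZ
  have hind : (fun ω => if 0 < Z ω then c else -c)
      = fun ω => {ω | 0 < Z ω}.indicator (fun _ => 2 * c) ω - c := by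
    funext ω
    by_cases h : 0 < Z ω
    · simp only [if_pos h, Set.indicator_of_mem (show ω ∈ {ω | 0 < Z ω} from h)]; ring
    · simp only [if_neg h, Set.indicator_of_notMem (show ω ∉ {ω | 0 < Z ω} from h)]; ring
  rw [hind, integral_sub ((integrable_const _).indicator hs) (integrable_const c),
    integral_indicator_const _ hs, integral_const, probReal_univ, smul_eq_mul, smul_eq_mul]
  ring

lemma integral_ite_pos_sub_add {f : Ω → ℝ} (hZ : Measurable Z) (hf : Integrable f μ)
    (c d : ℝ) :
    ∫ ω, ((if 0 < Z ω then c else -c) - d + f ω) ∂μ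
      = c * (2 * μ.real {ω | 0 < Z ω} - 1) - d + ∫ ω, f ω ∂μ := by
  have hite : Integrable (fun ω => if 0 < Z ω then c else -c) μ := by
    refine Integrable.of_bound
      ((Measurable.ite (measurableSet_lt measurable_const hZ) measurable_const
        measurable_const).aestronglyMeasurable) |c| (ae_of_all _ fun ω => ?_)
    split_ifs <;> simp
  rw [integral_add (f := fun ω => (if 0 < Z ω then c else -c) - d)
      (hite.sub (integrable_const d)) hf, integral_sub hite (integrable_const d),
    integral_ite_pos_const_neg hZ, integral_const, probReal_univ, one_smul]

lemma measureReal_pos_eq_one_sub_measureReal_neg (hZ : Measurable Z)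
    (h0 : μ {ω | Z ω = 0} = 0) :
    μ.real {ω | 0 < Z ω} = 1 - μ.real {ω | Z ω < 0} := by
  have hne : ∀ᵐ ω ∂μ, Z ω ≠ 0 := by
    rw [ae_iff]
    simpa using h0
  have hae : {ω | 0 < Z ω} =ᵐ[μ] ({ω | Z ω < 0}ᶜ : Set Ω) := by
    filter_upwards [hne] with ω hω
    change (0 < Z ω) = ¬(Z ω < 0)
    rw [not_lt, eq_iff_iff]
    exact ⟨le_of_lt, fun h => lt_of_le_of_ne h hω.symm⟩
  rw [measureReal_congr hae, probReal_compl_eq_one_sub (measurableSet_lt hZ measurable_const)]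

end SignOfRandomVariable

theorem stmt15_general {Ω : Type*} [MeasurableSpace Ω] (μ : Measure Ω) [IsProbabilityMeasure μ]
    (e : Ω → ℝ) (he : Measurable e) (a₁ a₂ b₁ b₂ : ℝ)
    (h20 : μ {ω | a₂ + b₂ * e ω = 0} = 0)
    (hint1 : Integrable (fun ω => Real.log |a₁ - b₁ * e ω|) μ)
    (hint2 : Integrable (fun ω => Real.log |a₂ + b₂ * e ω|) μ)
    (p₁ p₂ logρ ν₁ : ℝ)
    (hp₁ : p₁ = (μ {ω | a₁ - b₁ * e ω < 0}).toReal)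
    (hp₂ : p₂ = (μ {ω | a₂ + b₂ * e ω < 0}).toReal)
    (hp : 0 < p₁ + p₂)
    (hρ : logρ = (p₂ * ∫ ω, Real.log |a₁ - b₁ * e ω| ∂μ
        + p₁ * ∫ ω, Real.log |a₂ + b₂ * e ω| ∂μ) / (p₁ + p₂))
    (hν : ν₁ = ((∫ ω, Real.log |a₂ + b₂ * e ω| ∂μ)
        - ∫ ω, Real.log |a₁ - b₁ * e ω| ∂μ) / (2 * (p₁ + p₂))) :
    (∫ ω, ((if 0 < -a₁ + b₁ * e ω then ν₁ else -ν₁) - (-ν₁)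
        + Real.log |(-a₁) + b₁ * e ω|) ∂μ = logρ) ∧
      (∫ ω, ((if 0 < a₂ + b₂ * e ω then ν₁ else -ν₁) - ν₁
        + Real.log |a₂ + b₂ * e ω|) ∂μ = logρ) := by
  have hZ₁ : Measurable fun ω => -a₁ + b₁ * e ω := measurable_const.add (measurable_const.mul he)
  have hZ₂ : Measurable fun ω => a₂ + b₂ * e ω := measurable_const.add (measurable_const.mul he)
  have hlog₁ : (fun ω => Real.log |(-a₁) + b₁ * e ω|) = fun ω => Real.log |a₁ - b₁ * e ω| := by
    simp only [neg_add_eq_sub, abs_sub_comm]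
  have hp₁' : μ.real {ω | 0 < -a₁ + b₁ * e ω} = p₁ := by
    have hset : {ω | 0 < -a₁ + b₁ * e ω} = {ω | a₁ - b₁ * e ω < 0} := by
      ext ω
      simp only [Set.mem_ofPred_eq]
      constructor <;> intro h <;> linarith
    rw [hset, hp₁, measureReal_def]
  have hp₂' : μ.real {ω | 0 < a₂ + b₂ * e ω} = 1 - p₂ := by
    rw [measureReal_pos_eq_one_sub_measureReal_neg hZ₂ h20, hp₂, measureReal_def]
  have hne : p₁ + p₂ ≠ 0 := hp.ne'
  constructor
  · rw [integral_ite_pos_sub_add hZ₁ (hlog₁ ▸ hint1), hp₁', hlog₁, hρ, hν]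
    field_simp
    ring
  · rw [integral_ite_pos_sub_add hZ₂ hint2, hp₂', hρ, hν]
    field_simp
    ring

/-- Let `a₁, a₂ ∈ ℝ`, `b₁, b₂ > 0`, and `e` a real random variable
with `P(a₁ − b₁e = 0) = 0`, `P(a₂ + b₂e = 0) = 0` and integrable `log|a₁ − b₁e|`,
`log|a₂ + b₂e|`.  With `p₁ = P(a₁ − b₁e < 0)`, `p₂ = P(a₂ + b₂e < 0)`, `p₁ + p₂ > 0`,
`z(−1,u) = −a₁ + b₁u`, `z(1,u) = a₂ + b₂u`,
`log ρ = (p₂ E log|a₁−b₁e| + p₁ E log|a₂+b₂e|)/(p₁+p₂)` and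
`ν(1) = −ν(−1) = (E log|a₂+b₂e| − E log|a₁−b₁e|)/(2(p₁+p₂))`, for each `θ ∈ {−1,1}`:
`E(ν(sgn z(θ,e)) − ν(θ) + log|z(θ,e)|) = log ρ` (with `sgn t = 1` for `t > 0` and
`−1` for `t ≤ 0`, the case `t = 0` having probability zero). -/
theorem stmt15 {Ω : Type*} [MeasurableSpace Ω] (μ : Measure Ω) [IsProbabilityMeasure μ]
    (e : Ω → ℝ) (he : Measurable e) (a₁ a₂ b₁ b₂ : ℝ) (hb₁ : 0 < b₁) (hb₂ : 0 < b₂)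
    (h10 : μ {ω | a₁ - b₁ * e ω = 0} = 0) (h20 : μ {ω | a₂ + b₂ * e ω = 0} = 0)
    (hint1 : Integrable (fun ω => Real.log |a₁ - b₁ * e ω|) μ)
    (hint2 : Integrable (fun ω => Real.log |a₂ + b₂ * e ω|) μ)
    (p₁ p₂ logρ ν₁ : ℝ)
    (hp₁ : p₁ = (μ {ω | a₁ - b₁ * e ω < 0}).toReal)
    (hp₂ : p₂ = (μ {ω | a₂ + b₂ * e ω < 0}).toReal)
    (hp : 0 < p₁ + p₂)
    (hρ : logρ = (p₂ * ∫ ω, Real.log |a₁ - b₁ * e ω| ∂μ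
        + p₁ * ∫ ω, Real.log |a₂ + b₂ * e ω| ∂μ) / (p₁ + p₂))
    (hν : ν₁ = ((∫ ω, Real.log |a₂ + b₂ * e ω| ∂μ)
        - ∫ ω, Real.log |a₁ - b₁ * e ω| ∂μ) / (2 * (p₁ + p₂))) :
    (∫ ω, ((if 0 < -a₁ + b₁ * e ω then ν₁ else -ν₁) - (-ν₁)
        + Real.log |(-a₁) + b₁ * e ω|) ∂μ = logρ) ∧
      (∫ ω, ((if 0 < a₂ + b₂ * e ω then ν₁ else -ν₁) - ν₁
        + Real.log |a₂ + b₂ * e ω|) ∂μ = logρ) :=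
  stmt15_general μ e he a₁ a₂ b₁ b₂ h20 hint1 hint2 p₁ p₂ logρ ν₁ hp₁ hp₂ hp hρ hν
end

section
/- Let E₁₁, E₁₂, E₂₁, E₂₂ be nonnegative real numbers. Then there exists γ > 0 such that γ E₁₁ + E₁₂ < 1 and γ^{−1} E₂₁ + E₂₂ < 1 if and only if max(E₁₂, E₂₂) < 1 and E₁₁ E₂₁ < (1 − E₁₂)(1 − E₂₂). -/
/-! The two conditions say that `γ` lies strictly between `E₂₁ / (1 - E₂₂)` and
`(1 - E₁₂) / E₁₁`; such a `γ > 0` exists exactly when both margins `1 - E₁₂`, `1 - E₂₂` are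
positive and the interval is nonempty, which after clearing denominators is
`E₁₁ E₂₁ < (1 - E₁₂)(1 - E₂₂)`. -/

lemma mul_lt_mul_of_pos_mul_lt_of_inv_mul_lt {a c p q γ : ℝ} (ha : 0 ≤ a) (hc : 0 ≤ c)
    (hγ : 0 < γ) (hp : γ * a < p) (hq : γ⁻¹ * c < q) : a * c < p * q :=
  calc a * c = (γ * a) * (γ⁻¹ * c) := by field_simp
    _ < p * q := mul_lt_mul'' hp hq (by positivity) (by positivity)

lemma exists_pos_mul_lt_and_lt_mul {a c p q : ℝ} (ha : 0 ≤ a) (hc : 0 ≤ c) (hq : 0 < q)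
    (h : a * c < p * q) : ∃ γ, 0 < γ ∧ γ * a < p ∧ c < γ * q := by
  -- `γ := (c + δ) / q`, with `δ > 0` small enough that `a (c + δ) < p q`.
  set δ := (p * q - a * c) / (a + 1)
  have hδ : 0 < δ := div_pos (by linarith) (by linarith)
  have haδ : a * δ < p * q - a * c := by
    rw [mul_div_assoc', div_lt_iff₀ (by linarith)]
    nlinarith
  refine ⟨(c + δ) / q, by positivity, ?_, ?_⟩
  · rw [div_mul_eq_mul_div, div_lt_iff₀ hq]
    linarith
  · rw [div_mul_cancel₀ _ hq.ne']
    linarith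

theorem exists_pos_mul_lt_and_inv_mul_lt_iff {a c p q : ℝ} (ha : 0 ≤ a) (hc : 0 ≤ c) :
    (∃ γ, 0 < γ ∧ γ * a < p ∧ γ⁻¹ * c < q) ↔ 0 < p ∧ 0 < q ∧ a * c < p * q := by
  constructor
  · rintro ⟨γ, hγ, hp, hq⟩
    exact ⟨(mul_nonneg hγ.le ha).trans_lt hp, (mul_nonneg (inv_pos.2 hγ).le hc).trans_lt hq,
      mul_lt_mul_of_pos_mul_lt_of_inv_mul_lt ha hc hγ hp hq⟩
  · rintro ⟨-, hq, h⟩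
    obtain ⟨γ, hγ, hp, hcq⟩ := exists_pos_mul_lt_and_lt_mul ha hc hq h
    exact ⟨γ, hγ, hp, (inv_mul_lt_iff₀ hγ).2 hcq⟩

theorem stmt16_general (E₁₁ E₁₂ E₂₁ E₂₂ : ℝ)
    (h11 : 0 ≤ E₁₁) (h21 : 0 ≤ E₂₁) :
    (∃ γ : ℝ, 0 < γ ∧ γ * E₁₁ + E₁₂ < 1 ∧ γ⁻¹ * E₂₁ + E₂₂ < 1) ↔
      (max E₁₂ E₂₂ < 1 ∧ E₁₁ * E₂₁ < (1 - E₁₂) * (1 - E₂₂)) := by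
  simp only [← lt_sub_iff_add_lt, exists_pos_mul_lt_and_inv_mul_lt_iff h11 h21, max_lt_iff,
    sub_pos, and_assoc]

/-- For nonnegative reals `E₁₁, E₁₂, E₂₁, E₂₂`, there exists `γ > 0`
with `γ E₁₁ + E₁₂ < 1` and `γ⁻¹ E₂₁ + E₂₂ < 1` if and only if `max(E₁₂,E₂₂) < 1` and
`E₁₁ E₂₁ < (1 − E₁₂)(1 − E₂₂)`. -/
theorem stmt16 (E₁₁ E₁₂ E₂₁ E₂₂ : ℝ)
    (h11 : 0 ≤ E₁₁) (h12 : 0 ≤ E₁₂) (h21 : 0 ≤ E₂₁) (h22 : 0 ≤ E₂₂) :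
    (∃ γ : ℝ, 0 < γ ∧ γ * E₁₁ + E₁₂ < 1 ∧ γ⁻¹ * E₂₁ + E₂₂ < 1) ↔
      (max E₁₂ E₂₂ < 1 ∧ E₁₁ * E₂₁ < (1 - E₁₂) * (1 - E₂₂)) :=
  stmt16_general E₁₁ E₁₂ E₂₁ E₂₂ h11 h21
end
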